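/- arXiv:1504.03500 — 3 statements merged into one kernel-verified Lean document; each statement's English description precedes it below -/
import Mathlib

section
/- Let G be a cubic graph and let P* be a valid factor of G minimizing the number of components, and among such, minimizing the number of odd cycle components. Then every odd cycle of P* is chordless (induced) in G. -/
open SimpleGraph

/-- A cubic graph: every vertex has degree 3. -/
def IsCubic {V : Type*} [Fintype V] (G : SimpleGraph V) : Prop :=
  ∀ v : V, Nat.card (G.neighborSet v) = 3

/-- A circular nowhere-zero `r`-flow: an orientation `dir` of `G` together with
a flow value `f` on each directed edge, with values in `[1, r-1]` and flow
conservation at every vertex. -/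
structure CNZF {V : Type*} [Fintype V] (G : SimpleGraph V) (r : ℝ) where
  dir : V → V → Bool
  f : V → V → ℝ
  orients : ∀ u v, G.Adj u v ↔ (dir u v = true ∨ dir v u = true)
  asymm : ∀ u v, dir u v = true → dir v u = false
  lb : ∀ u v, dir u v = true → 1 ≤ f u v
  ub : ∀ u v, dir u v = true → f u v ≤ r - 1
  conserv : ∀ v : V, (∑ u : V, if dir v u = true then f v u else 0)
      = ∑ u : V, if dir u v = true then f u v else 0

/-- Out-degree of a vertex in an orientation. -/
noncomputable def outDeg {V : Type*} (dir : V → V → Bool) (v : V) : ℕ :=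
  Nat.card {u | dir v u = true}

/-- Every connected component of the subgraph induced by `S` is a tree
on at most `m` vertices. -/
def MonoOK {V : Type*} (G : SimpleGraph V) (m : ℕ) (S : Set V) : Prop :=
  (G.induce S).IsAcyclic ∧
    ∀ c : (G.induce S).ConnectedComponent, Nat.card c.supp ≤ m

/-- A `k`-weak bisection, given by its first part `S`. -/
def IsWeakBisection {V : Type*} [Fintype V] (G : SimpleGraph V) (k : ℕ) (S : Set V) : Prop :=
  Nat.card S = Nat.card (Sᶜ : Set V) ∧ MonoOK G (k-2) S ∧ MonoOK G (k-2) (Sᶜ : Set V)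

/-- Every monochromatic component of the 2-coloring `c` has at most `m` vertices. -/
def MonoAtMost {V : Type*} (G : SimpleGraph V) (c : V → Bool) (m : ℕ) : Prop :=
  ∀ b : Bool, ∀ comp : (G.induce {v | c v = b}).ConnectedComponent,
    Nat.card comp.supp ≤ m

/-- Edges of `L_k` (on vertex labels `0, …, 5+2k`): `L_0` is `K_{3,3}` minus an
edge (parts `{0,1,4}` and `{2,3,5}`, edge `45` removed, degree-2 vertices `4,5`);
at step `j` the two new adjacent vertices `4+2j, 5+2j` are attached to the
previous degree-2 vertices `2+2j, 3+2j`. The degree-2 vertices of `L_k` are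
`4+2k` and `5+2k`. -/
def LEdge (k : ℕ) (a b : ℕ) : Prop :=
  (a, b) ∈ ({(0,2),(0,3),(0,5),(1,2),(1,3),(1,5),(4,2),(4,3)} : Set (ℕ × ℕ)) ∨
  ∃ j, 1 ≤ j ∧ j ≤ k ∧
    ((a, b) = (4+2*j, 5+2*j) ∨ (a, b) = (2+2*j, 4+2*j) ∨ (a, b) = (3+2*j, 5+2*j))

/-- The graph `L_k`. -/
def Lgraph (k : ℕ) : SimpleGraph (Fin (6+2*k)) :=
  SimpleGraph.fromRel (fun a b => LEdge k a.val b.val)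

/-- Edges of `T_k`: one copy of `L'_k` (the copy of `L_k` on `0..5+2k` with apex
`6+2k`), two copies of `L'_0` (on `7+2k..12+2k` with apex `13+2k`, and on
`14+2k..19+2k` with apex `20+2k`), and a central vertex `21+2k` adjacent to the
three apexes. -/
def TEdge (k : ℕ) (a b : ℕ) : Prop :=
  LEdge k a b
  ∨ (a = 6+2*k ∧ (b = 4+2*k ∨ b = 5+2*k))
  ∨ (∃ a' b', LEdge 0 a' b' ∧ a = 7+2*k+a' ∧ b = 7+2*k+b')
  ∨ (a = 13+2*k ∧ (b = 11+2*k ∨ b = 12+2*k))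
  ∨ (∃ a' b', LEdge 0 a' b' ∧ a = 14+2*k+a' ∧ b = 14+2*k+b')
  ∨ (a = 20+2*k ∧ (b = 18+2*k ∨ b = 19+2*k))
  ∨ (a = 21+2*k ∧ (b = 6+2*k ∨ b = 13+2*k ∨ b = 20+2*k))

/-- The cubic graph `T_k`. -/
def Tgraph (k : ℕ) : SimpleGraph (Fin (22+2*k)) :=
  SimpleGraph.fromRel (fun a b => TEdge k a.val b.val)

/-- A valid factor of `G`: a spanning subgraph all of whose components are paths
or cycles (equivalently, all degrees are 1 or 2), such that the two endpoints
(degree-1 vertices) of every odd component are non-adjacent in `G`; in particular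
no component is an isolated vertex. -/
def IsValidFactor {V : Type*} (G H : SimpleGraph V) : Prop :=
  H ≤ G ∧
  (∀ v : V, 1 ≤ Nat.card (H.neighborSet v) ∧ Nat.card (H.neighborSet v) ≤ 2) ∧
  ∀ c : H.ConnectedComponent, Odd (Nat.card c.supp) →
    ∀ u v : V, u ∈ c.supp → v ∈ c.supp → u ≠ v →
      Nat.card (H.neighborSet u) = 1 → Nat.card (H.neighborSet v) = 1 → ¬ G.Adj u v

/-- A component of `H` is a cycle iff all its vertices have degree 2 in `H`. -/
def IsCycleComp {V : Type*} (H : SimpleGraph V) (c : H.ConnectedComponent) : Prop :=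
  ∀ v ∈ c.supp, Nat.card (H.neighborSet v) = 2

/-- An odd cycle component. -/
def OddCycleComp {V : Type*} (H : SimpleGraph V) (c : H.ConnectedComponent) : Prop :=
  Odd (Nat.card c.supp) ∧ IsCycleComp H c

/-- An odd path component (a component with an odd number of vertices containing
a degree-1 vertex). -/
def OddPathComp {V : Type*} (H : SimpleGraph V) (c : H.ConnectedComponent) : Prop :=
  Odd (Nat.card c.supp) ∧ ∃ v ∈ c.supp, Nat.card (H.neighborSet v) = 1

noncomputable def numComponents {V : Type*} (H : SimpleGraph V) : ℕ := Nat.card H.ConnectedComponent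

noncomputable def numOddCycles {V : Type*} (H : SimpleGraph V) : ℕ :=
  Nat.card {c : H.ConnectedComponent // OddCycleComp H c}

/-- `H` is a valid factor of `G` with the minimum number of components. -/
def MinimizesComponents {V : Type*} (G H : SimpleGraph V) : Prop :=
  IsValidFactor G H ∧ ∀ H' : SimpleGraph V, IsValidFactor G H' →
    numComponents H ≤ numComponents H'

/-- `H` is a valid factor of `G` minimizing the number of components and,
subject to that, the number of odd cycles. -/
def IsMinValidFactor {V : Type*} (G H : SimpleGraph V) : Prop :=
  MinimizesComponents G H ∧
  ∀ H' : SimpleGraph V, IsValidFactor G H' →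
    numComponents H' = numComponents H → numOddCycles H ≤ numOddCycles H'

/-- An external vertex of a factor: an endpoint of a path component, or a vertex
of an odd cycle component. -/
def ExternalVtx {V : Type*} (H : SimpleGraph V) (v : V) : Prop :=
  Nat.card (H.neighborSet v) = 1 ∨ OddCycleComp H (H.connectedComponentMk v)


/-!
Let `c₀ c₁ … cₘ₋₁` be an odd cycle of `H` (indices mod `m`) with a chord `c₀cₖ`, `2 ≤ k ≤ m - 2`.
Replacing the cycle by a Hamiltonian path of `G` on its vertex set keeps the number of components
and removes an odd cycle, so by minimality such a path cannot be valid: its two ends must be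
adjacent in `G`. The chord yields the Hamiltonian path `c₁ … cₖ c₀ cₘ₋₁ … cₖ₊₁`, so `c₁cₖ₊₁` is
an edge, which in turn yields the path `cₖ₊₂ … cₘ₋₁ c₀ cₖ cₖ₊₁ c₁ … cₖ₋₁`, so `cₖ₋₁cₖ₊₂` is an
edge. Together with the mirror images (read the cycle backwards) this gives `cₖ₋₁` and `cₖ₊₁`
four distinct neighbours each, unless `k = m - 3` and `k = 3`, which is impossible for odd `m`.
-/

namespace SimpleGraph

variable {V : Type*}

theorem Reachable.of_forall_adj {H H' : SimpleGraph V} (h : ∀ x y, H.Adj x y → H'.Reachable x y)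
    {x y : V} (hxy : H.Reachable x y) : H'.Reachable x y := by
  rw [reachable_eq_reflTransGen] at hxy
  induction hxy with
  | refl => rfl
  | tail _ hab ih => exact ih.trans (h _ _ hab)

namespace ConnectedComponent

theorem supp_connectedComponentMk_eq {H H' : SimpleGraph V}
    (h : ∀ x y, H.Reachable x y ↔ H'.Reachable x y) (x : V) :
    (H'.connectedComponentMk x).supp = (H.connectedComponentMk x).supp := by
  ext y
  simp only [mem_supp_iff, ConnectedComponent.eq, h]

def equivOfReachableIff {H H' : SimpleGraph V} (h : ∀ x y, H.Reachable x y ↔ H'.Reachable x y) :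
    H.ConnectedComponent ≃ H'.ConnectedComponent :=
  Quot.congrRight h

theorem supp_equivOfReachableIff {H H' : SimpleGraph V}
    (h : ∀ x y, H.Reachable x y ↔ H'.Reachable x y) (d : H.ConnectedComponent) :
    (equivOfReachableIff h d).supp = d.supp := by
  induction d using ConnectedComponent.ind with
  | h x => exact supp_connectedComponentMk_eq h x

end ConnectedComponent

namespace Walk

variable {G : SimpleGraph V}

theorem reachable_toSubgraph_spanningCoe {a b x : V} (Q : G.Walk a b) (hx : x ∈ Q.support) :
    Q.toSubgraph.spanningCoe.Reachable a x := by
  induction Q with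
  | nil => rw [support_nil, List.mem_singleton] at hx; rw [hx]
  | cons h Q ih =>
    rcases List.mem_cons.mp hx with rfl | hx
    · rfl
    · refine Reachable.trans (Adj.reachable ?_) ((ih hx).mono ?_)
      · simp [h.ne]
      · simp [Walk.toSubgraph]

theorem IsPath.ncard_neighborSet_toSubgraph_of_ne {a b : V} {Q : G.Walk a b} (hQ : Q.IsPath)
    {x : V} (hx : x ∈ Q.support) (ha : x ≠ a) (hb : x ≠ b) :
    (Q.toSubgraph.neighborSet x).ncard = 2 := by
  obtain ⟨i, rfl, hi⟩ := mem_support_iff_exists_getVert.mp hx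
  have hi0 : i ≠ 0 := by rintro rfl; exact ha Q.getVert_zero
  have hil : i ≠ Q.length := by rintro rfl; exact hb Q.getVert_length
  exact hQ.ncard_neighborSet_toSubgraph_internal_eq_two hi0 (by omega)

theorem adj_getVert_of_succ_or_pred {u v : V} (p : G.Walk u v) {i j : ℕ} (hi : i ≤ p.length)
    (hj : j ≤ p.length) (h : j = i + 1 ∨ i = j + 1) : G.Adj (p.getVert i) (p.getVert j) := by
  rcases h with rfl | rfl
  · exact p.adj_getVert_succ (by omega)
  · exact (p.adj_getVert_succ (by omega)).symm

variable {u : V} {P : G.Walk u u}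

theorem IsCycle.getVert_eq_getVert (hP : P.IsCycle) {i j : ℕ} (hi : i ≤ P.length)
    (hj : j ≤ P.length) (h : P.getVert i = P.getVert j) :
    i = j ∨ i = 0 ∧ j = P.length ∨ i = P.length ∧ j = 0 := by
  have hinj {i j : ℕ} (hi0 : 1 ≤ i) (hi : i ≤ P.length) (hj0 : 1 ≤ j) (hj : j ≤ P.length)
      (h : P.getVert i = P.getVert j) : i = j := hP.getVert_injOn ⟨hi0, hi⟩ ⟨hj0, hj⟩ h
  have hlen : 1 ≤ P.length := by have := hP.three_le_length; omega
  rcases Nat.eq_zero_or_pos i with rfl | hi0 <;> rcases Nat.eq_zero_or_pos j with rfl | hj0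
  · exact Or.inl rfl
  · have := hinj hlen le_rfl hj0 hj (P.getVert_length.trans (P.getVert_zero.symm.trans h))
    omega
  · have := hinj hi0 hi hlen le_rfl (h.trans (P.getVert_zero.trans P.getVert_length.symm))
    omega
  · exact Or.inl (hinj hi0 hi hj0 hj h)

theorem IsCycle.exists_getVert_eq (hP : P.IsCycle) {x : V} (hx : x ∈ P.support) :
    ∃ i, 1 ≤ i ∧ i ≤ P.length ∧ P.getVert i = x := by
  obtain ⟨i, rfl, hi⟩ := mem_support_iff_exists_getVert.mp hx
  rcases Nat.eq_zero_or_pos i with rfl | hi0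
  · exact ⟨P.length, by have := hP.three_le_length; omega, le_rfl, by simp⟩
  · exact ⟨i, hi0, hi, rfl⟩

theorem IsCycle.exists_getVert_eq_of_not_adj (hP : P.IsCycle) {v : V} (hv : v ∈ P.support)
    (hvu : v ≠ u) (huv : ¬ G.Adj u v) : ∃ k, 2 ≤ k ∧ k + 2 ≤ P.length ∧ P.getVert k = v := by
  obtain ⟨k, hk1, hkm, rfl⟩ := hP.exists_getVert_eq hv
  have hk1' : k ≠ 1 := by
    rintro rfl
    exact huv (by simpa using P.adj_getVert_succ (i := 0) (by omega))
  have hkm' : k ≠ P.length := by rintro rfl; exact hvu P.getVert_length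
  have hkm'' : k + 1 ≠ P.length := fun h =>
    huv (by simpa [h] using (P.adj_getVert_succ (i := k) (by omega)).symm)
  exact ⟨k, by omega, by omega, rfl⟩

theorem IsCycle.ncard_support (hP : P.IsCycle) : {x | x ∈ P.support}.ncard = P.length := by
  classical
  have : {x | x ∈ P.support} = ↑P.support.tail.toFinset := by
    ext x
    rw [Set.mem_ofPred_eq, List.coe_toFinset, Set.mem_ofPred_eq, mem_support_iff,
      or_iff_right_of_imp fun h => h ▸ end_mem_tail_support hP.not_nil]
  rw [this, Set.ncard_coe_finset, List.toFinset_card_of_nodup hP.support_nodup,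
    List.length_tail, length_support, Nat.add_sub_cancel]

end Walk

def replaceComponent (H : SimpleGraph V) (c : H.ConnectedComponent) (K : SimpleGraph V) :
    SimpleGraph V :=
  H \ c.toSimpleGraph.spanningCoe ⊔ K

section replaceComponent

variable {H K : SimpleGraph V} {c : H.ConnectedComponent}

theorem replaceComponent_adj {x y : V} :
    (H.replaceComponent c K).Adj x y ↔ (x ∉ c.supp ∧ H.Adj x y) ∨ K.Adj x y := by
  simp only [replaceComponent, sup_adj, sdiff_adj,
    ConnectedComponent.adj_spanningCoe_toSimpleGraph]
  tauto

theorem neighborSet_replaceComponent_of_mem {x : V} (hx : x ∈ c.supp) :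
    (H.replaceComponent c K).neighborSet x = K.neighborSet x := by
  ext y
  simp [replaceComponent_adj, hx]

theorem neighborSet_replaceComponent_of_notMem (hK : ∀ x y, K.Adj x y → x ∈ c.supp) {x : V}
    (hx : x ∉ c.supp) : (H.replaceComponent c K).neighborSet x = H.neighborSet x := by
  ext y
  simp only [mem_neighborSet, replaceComponent_adj, hx, not_false_eq_true, true_and,
    or_iff_left_iff_imp]
  exact fun h => absurd (hK x y h) hx

theorem reachable_replaceComponent_iff (hK : ∀ x y, K.Adj x y → x ∈ c.supp)
    (hKconn : ∀ x ∈ c.supp, ∀ y ∈ c.supp, K.Reachable x y) (x y : V) :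
    H.Reachable x y ↔ (H.replaceComponent c K).Reachable x y := by
  have hle : K ≤ H.replaceComponent c K := le_sup_right
  constructor
  · refine Reachable.of_forall_adj fun x y hxy => ?_
    by_cases hx : x ∈ c.supp
    · exact (hKconn x hx y (c.mem_supp_of_adj_mem_supp hx hxy)).mono hle
    · exact (replaceComponent_adj.mpr (Or.inl ⟨hx, hxy⟩)).reachable
  · refine Reachable.of_forall_adj fun x y hxy => ?_
    rcases replaceComponent_adj.mp hxy with ⟨-, h⟩ | h
    · exact h.reachable
    · exact c.reachable_of_mem_supp (hK x y h) (hK y x h.symm)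

end replaceComponent

end SimpleGraph

open SimpleGraph

section

variable {V : Type*} {G H K : SimpleGraph V} {c : H.ConnectedComponent}

theorem IsCycleComp.exists_isCycle [Finite V] (hc : IsCycleComp H c) {u : V} (hu : u ∈ c.supp) :
    ∃ P : H.Walk u u, P.IsCycle ∧ ∀ x, x ∈ P.support ↔ x ∈ c.supp := by
  set K := c.toSimpleGraph.spanningCoe
  have hKH : K ≤ H := fun x y h => (c.adj_spanningCoe_toSimpleGraph.mp h).2
  have hKN (x) (hx : x ∈ c.supp) : K.neighborSet x = H.neighborSet x := by
    ext y
    exact c.adj_spanningCoe_toSimpleGraph.trans (and_iff_right hx)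
  have hK : K.IsCycles := fun x ⟨_, hy⟩ => by
    have hx := (c.adj_spanningCoe_toSimpleGraph.mp hy).1
    rw [hKN x hx, ← Nat.card_coe_set_eq]
    exact hc x hx
  have hKreach (x) (hx : x ∈ c.supp) : K.Reachable u x :=
    (c.reachable_toSimpleGraph hu hx).map
      ⟨Subtype.val, fun {x _} h => c.adj_spanningCoe_toSimpleGraph.mpr ⟨x.2, h⟩⟩
  have hun : (K.neighborSet u).Nonempty := by
    refine Set.nonempty_of_ncard_ne_zero ?_
    rw [hKN u hu, ← Nat.card_coe_set_eq, hc u hu]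
    decide
  obtain ⟨P, hP, hverts⟩ := hK.exists_cycle_toSubgraph_verts_eq_connectedComponentSupp
    (c := K.connectedComponentMk u) rfl hun
  refine ⟨P.mapLe hKH, hP.mapLe hKH, fun x => ?_⟩
  rw [Walk.support_mapLe_eq_support, ← Walk.mem_verts_toSubgraph, hverts,
    ConnectedComponent.mem_supp_iff, ConnectedComponent.eq]
  refine ⟨fun h => ?_, fun hx => (hKreach x hx).symm⟩
  rw [ConnectedComponent.mem_supp_iff] at hu ⊢
  rw [← hu]
  exact ConnectedComponent.sound (h.mono hKH)

theorem IsCubic.eq_or_eq_of_adj [Fintype V] (hG : IsCubic G)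
    {x a b s t : V} (ha : G.Adj x a) (hb : G.Adj x b) (hs : G.Adj x s) (ht : G.Adj x t) :
    a = b ∨ a = s ∨ a = t ∨ b = s ∨ b = t ∨ s = t := by
  classical
  by_contra! h
  have hsub : ({a, b, s, t} : Set V) ⊆ G.neighborSet x := by
    rintro y (rfl | rfl | rfl | rfl)
    exacts [ha, hb, hs, ht]
  have := Set.ncard_le_ncard hsub
  rw [← Nat.card_coe_set_eq (G.neighborSet x), hG x, Set.ncard_eq_toFinset_card'] at this
  simp [Finset.card_insert_of_notMem, h] at this

theorem numComponents_replaceComponent (hK : ∀ x y, K.Adj x y → x ∈ c.supp)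
    (hKconn : ∀ x ∈ c.supp, ∀ y ∈ c.supp, K.Reachable x y) :
    numComponents (H.replaceComponent c K) = numComponents H :=
  Nat.card_congr (ConnectedComponent.equivOfReachableIff
    (reachable_replaceComponent_iff hK hKconn)).symm

theorem numOddCycles_replaceComponent_lt [Finite V] (hc : OddCycleComp H c)
    (hK : ∀ x y, K.Adj x y → x ∈ c.supp)
    (hKconn : ∀ x ∈ c.supp, ∀ y ∈ c.supp, K.Reachable x y) {x : V} (hx : x ∈ c.supp)
    (hdeg : Nat.card (K.neighborSet x) ≠ 2) :
    numOddCycles (H.replaceComponent c K) < numOddCycles H := by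
  set φ := ConnectedComponent.equivOfReachableIff (reachable_replaceComponent_iff hK hKconn)
  have hsupp (d) : (φ d).supp = d.supp := ConnectedComponent.supp_equivOfReachableIff _ d
  have hodd (d) (hd : OddCycleComp _ (φ d)) : OddCycleComp H d ∧ d ≠ c := by
    have hdc : d ≠ c := by
      rintro rfl
      apply hdeg
      rw [← neighborSet_replaceComponent_of_mem hx]
      exact hd.2 x ((hsupp _).symm ▸ hx)
    refine ⟨⟨hsupp d ▸ hd.1, fun z hz => ?_⟩, hdc⟩
    have hzc : z ∉ c.supp := fun h => hdc (ConnectedComponent.eq_of_common_vertex hz h)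
    rw [← neighborSet_replaceComponent_of_notMem hK hzc]
    exact hd.2 z ((hsupp d).symm ▸ hz)
  calc numOddCycles (H.replaceComponent c K)
      ≤ Nat.card {d : H.ConnectedComponent // OddCycleComp H d ∧ d ≠ c} :=
        Nat.card_le_card_of_injective (fun d' => ⟨φ.symm d', hodd _ (by simpa using d'.2)⟩)
          fun d₁ d₂ h => Subtype.ext (φ.symm.injective (congrArg Subtype.val h))
    _ = ({d | OddCycleComp H d} \ {c}).ncard := Nat.card_coe_set_eq _
    _ < ({d | OddCycleComp H d}).ncard := Set.ncard_sdiff_singleton_lt_of_mem hc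
    _ = numOddCycles H := (Nat.card_coe_set_eq _).symm

theorem IsMinValidFactor.not_isValidFactor_replaceComponent [Finite V]
    (hmin : IsMinValidFactor G H) (hc : OddCycleComp H c) (hK : ∀ x y, K.Adj x y → x ∈ c.supp)
    (hKconn : ∀ x ∈ c.supp, ∀ y ∈ c.supp, K.Reachable x y) {x : V} (hx : x ∈ c.supp)
    (hdeg : Nat.card (K.neighborSet x) ≠ 2) : ¬ IsValidFactor G (H.replaceComponent c K) :=
  fun hvalid => (hmin.2 _ hvalid (numComponents_replaceComponent hK hKconn)).not_gt
    (numOddCycles_replaceComponent_lt hc hK hKconn hx hdeg)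

theorem IsValidFactor.replaceComponent (hH : IsValidFactor G H) (hKG : K ≤ G)
    (hK : ∀ x y, K.Adj x y → x ∈ c.supp)
    (hKconn : ∀ x ∈ c.supp, ∀ y ∈ c.supp, K.Reachable x y) {a b : V}
    (hdeg : ∀ x ∈ c.supp, 1 ≤ Nat.card (K.neighborSet x) ∧ Nat.card (K.neighborSet x) ≤ 2)
    (hends : ∀ x ∈ c.supp, Nat.card (K.neighborSet x) = 1 → x = a ∨ x = b)
    (hab : ¬ G.Adj a b) : IsValidFactor G (H.replaceComponent c K) := by
  have hreach := reachable_replaceComponent_iff hK hKconn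
  have hdeg' (x) (hx : x ∉ c.supp) :
      Nat.card ((H.replaceComponent c K).neighborSet x) = Nat.card (H.neighborSet x) := by
    rw [neighborSet_replaceComponent_of_notMem hK hx]
  refine ⟨sup_le (sdiff_le.trans hH.1) hKG, fun x => ?_, fun d hodd x y hx hy hxy hx1 hy1 => ?_⟩
  · by_cases hx : x ∈ c.supp
    · rw [neighborSet_replaceComponent_of_mem hx]
      exact hdeg x hx
    · rw [hdeg' x hx]
      exact hH.2.1 x
  obtain rfl : (H.replaceComponent c K).connectedComponentMk x = d := hx
  have hxy' : H.Reachable x y := (hreach x y).mpr (ConnectedComponent.exact hy.symm)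
  have hyc : y ∈ c.supp ↔ x ∈ c.supp := by
    simp only [ConnectedComponent.mem_supp_iff, ConnectedComponent.sound hxy']
  by_cases hxc : x ∈ c.supp
  · rw [neighborSet_replaceComponent_of_mem hxc] at hx1
    rw [neighborSet_replaceComponent_of_mem (hyc.mpr hxc)] at hy1
    rcases hends x hxc hx1 with rfl | rfl <;> rcases hends y (hyc.mpr hxc) hy1 with rfl | rfl
    exacts [absurd rfl hxy, hab, fun h => hab h.symm, absurd rfl hxy]
  · rw [ConnectedComponent.supp_connectedComponentMk_eq hreach] at hodd
    rw [hdeg' x hxc] at hx1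
    rw [hdeg' y (hyc.not.mpr hxc)] at hy1
    exact hH.2.2 _ hodd x y rfl (ConnectedComponent.sound hxy'.symm) hxy hx1 hy1

theorem IsMinValidFactor.adj_of_isPath [Finite V] (hmin : IsMinValidFactor G H)
    (hc : OddCycleComp H c) {a b : V} (Q : G.Walk a b) (hQ : Q.IsPath) (hab : a ≠ b)
    (hsupp : ∀ x, x ∈ Q.support ↔ x ∈ c.supp) : G.Adj a b := by
  set K := Q.toSubgraph.spanningCoe
  have hK (x y) (h : K.Adj x y) : x ∈ c.supp :=
    (hsupp x).mp (Q.mem_verts_toSubgraph.mp (Q.toSubgraph.edge_vert h))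
  have hKconn : ∀ x ∈ c.supp, ∀ y ∈ c.supp, K.Reachable x y := fun x hx y hy =>
    (Q.reachable_toSubgraph_spanningCoe ((hsupp x).mpr hx)).symm.trans
      (Q.reachable_toSubgraph_spanningCoe ((hsupp y).mpr hy))
  have hQn : ¬ Q.Nil := Walk.not_nil_of_ne hab
  have ha : Nat.card (K.neighborSet a) = 1 := by
    rw [Nat.card_coe_set_eq]
    exact (congrArg Set.ncard (hQ.neighborSet_toSubgraph_startpoint hQn)).trans
      (Set.ncard_singleton _)
  have hb : Nat.card (K.neighborSet b) = 1 := by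
    rw [Nat.card_coe_set_eq]
    exact (congrArg Set.ncard (hQ.neighborSet_toSubgraph_endpoint hQn)).trans
      (Set.ncard_singleton _)
  have hint (x) (hx : x ∈ c.supp) (hxa : x ≠ a) (hxb : x ≠ b) :
      Nat.card (K.neighborSet x) = 2 :=
    (Nat.card_coe_set_eq _).trans
      (hQ.ncard_neighborSet_toSubgraph_of_ne ((hsupp x).mpr hx) hxa hxb)
  by_contra hnadj
  refine hmin.not_isValidFactor_replaceComponent hc hK hKconn ((hsupp a).mp Q.start_mem_support)
    (by rw [ha]; decide) (hmin.1.1.replaceComponent (Subgraph.spanningCoe_le _) hK hKconn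
      (fun x hx => ?_) (fun x hx hx1 => ?_) hnadj)
  · by_cases hxa : x = a
    · rw [hxa, ha]; decide
    by_cases hxb : x = b
    · rw [hxb, hb]; decide
    rw [hint x hx hxa hxb]; decide
  · by_contra h
    push Not at h
    rw [hint x hx h.1 h.2] at hx1
    exact absurd hx1 (by decide)

/-- `g` lists the vertices `P.getVert 1, …, P.getVert P.length` of the cycle `P` in the order
of a Hamiltonian path of `G` on `c`. -/
theorem IsMinValidFactor.adj_getVert_of_reindex [Finite V] (hmin : IsMinValidFactor G H)
    (hc : OddCycleComp H c) {u : V} {P : H.Walk u u} (hP : P.IsCycle)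
    (hsupp : ∀ x, x ∈ P.support ↔ x ∈ c.supp) (g : ℕ → ℕ)
    (hg : ∀ t < P.length, 1 ≤ g t ∧ g t ≤ P.length)
    (hginj : ∀ s < P.length, ∀ t < P.length, g s = g t → s = t)
    (hchain : ∀ t, t + 1 < P.length → G.Adj (P.getVert (g t)) (P.getVert (g (t + 1)))) :
    G.Adj (P.getVert (g 0)) (P.getVert (g (P.length - 1))) := by
  set m := P.length
  have hm : 3 ≤ m := hP.three_le_length
  have hFinj (s) (hs : s < m) (t) (ht : t < m) (h : P.getVert (g s) = P.getVert (g t)) : s = t :=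
    hginj s hs t ht (hP.getVert_injOn (hg s hs) (hg t ht) h)
  have hsurj : ∀ i ∈ Finset.Icc 1 m, ∃ t, ∃ _ : t ∈ Finset.range m, i = g t :=
    Finset.surj_on_of_inj_on_of_card_le (fun t _ => g t)
      (fun t ht => Finset.mem_Icc.mpr (hg t (Finset.mem_range.mp ht)))
      (fun s t hs ht => hginj s (Finset.mem_range.mp hs) t (Finset.mem_range.mp ht)) (by simp)
  set L := (List.range m).map fun t => P.getVert (g t)
  have hL : L ≠ [] := by simp [L]; omega
  have hchainL : L.IsChain G.Adj := by
    rw [List.isChain_map, List.isChain_range]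
    exact fun t ht => hchain t (by omega)
  have hQ : (Walk.ofSupport L hL hchainL).IsPath := by
    rw [Walk.isPath_def, Walk.support_ofSupport]
    exact List.Nodup.map_on (fun s hs t ht => hFinj s (List.mem_range.mp hs) t
      (List.mem_range.mp ht)) List.nodup_range
  have hhead : L.head hL = P.getVert (g 0) := by simp [L]
  have hlast : L.getLast hL = P.getVert (g (m - 1)) := by simp [L]
  have hends : L.head hL ≠ L.getLast hL := by
    rw [hhead, hlast]
    exact fun h => by have := hFinj 0 (by omega) (m - 1) (by omega) h; omega
  have key := hmin.adj_of_isPath hc _ hQ hends fun x => by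
    rw [Walk.support_ofSupport, ← hsupp]
    simp only [L, List.mem_map, List.mem_range]
    constructor
    · rintro ⟨t, -, rfl⟩
      exact P.getVert_mem_support _
    · intro hx
      obtain ⟨i, hi0, hi, rfl⟩ := hP.exists_getVert_eq hx
      obtain ⟨t, ht, rfl⟩ := hsurj i (Finset.mem_Icc.mpr ⟨hi0, hi⟩)
      exact ⟨t, Finset.mem_range.mp ht, rfl⟩
  rwa [hhead, hlast] at key

theorem IsMinValidFactor.adj_getVert_of_chord [Finite V] (hmin : IsMinValidFactor G H)
    (hc : OddCycleComp H c) {u : V} {P : H.Walk u u} (hP : P.IsCycle)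
    (hsupp : ∀ x, x ∈ P.support ↔ x ∈ c.supp) {k : ℕ} (hk : 2 ≤ k) (hkm : k + 2 ≤ P.length)
    (hchord : G.Adj u (P.getVert k)) :
    G.Adj (P.getVert 1) (P.getVert (k + 1)) ∧ G.Adj (P.getVert (k - 1)) (P.getVert (k + 2)) := by
  have hstep (i j : ℕ) (hi : i ≤ P.length) (hj : j ≤ P.length) (h : j = i + 1 ∨ i = j + 1) :
      G.Adj (P.getVert i) (P.getVert j) :=
    hmin.1.1.1 (P.adj_getVert_of_succ_or_pred hi hj h)
  have hchord' : G.Adj (P.getVert P.length) (P.getVert k) := by rwa [P.getVert_length]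
  -- the path `c₁ … cₖ cₘ cₘ₋₁ … cₖ₊₁`, writing `cᵢ = P.getVert i` and `m = P.length`
  have h₁ : G.Adj (P.getVert 1) (P.getVert (k + 1)) := by
    have := hmin.adj_getVert_of_reindex hc hP hsupp
      (fun t => if t < k then t + 1 else P.length + k - t)
      (fun t ht => by split_ifs <;> omega) (fun s hs t ht => by split_ifs <;> omega)
      fun t ht => by
        split_ifs
        · exact hstep _ _ (by omega) (by omega) (by omega)
        · rw [show P.length + k - (t + 1) = P.length by omega, show t + 1 = k by omega]
          exact hchord'.symm
        · omega
        · exact hstep _ _ (by omega) (by omega) (by omega)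
    simpa [show 0 < k by omega, show ¬ P.length - 1 < k by omega,
      show P.length + k - (P.length - 1) = k + 1 by omega] using this
  refine ⟨h₁, ?_⟩
  -- the path `cₖ₊₂ … cₘ cₖ cₖ₊₁ c₁ … cₖ₋₁`
  have := hmin.adj_getVert_of_reindex hc hP hsupp
    (fun t => if t < P.length - k - 1 then t + k + 2
      else if t < P.length - k + 1 then t + 2 * k + 1 - P.length else t + k - P.length)
    (fun t ht => by split_ifs <;> omega) (fun s hs t ht => by split_ifs <;> omega)
    fun t ht => by
      split_ifs <;> first
        | omega
        | exact hstep _ _ (by omega) (by omega) (by omega)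
        | skip
      · rw [show t + 1 + 2 * k + 1 - P.length = k by omega, show t + k + 2 = P.length by omega]
        exact hchord'
      · rw [show t + 1 + k - P.length = 1 by omega,
          show t + 2 * k + 1 - P.length = k + 1 by omega]
        exact h₁.symm
  simpa [show 0 < P.length - k - 1 by omega, show ¬ P.length - 1 < P.length - k - 1 by omega,
    show ¬ P.length - 1 < P.length - k + 1 by omega,
    show P.length - 1 + k - P.length = k - 1 by omega, add_comm k 2] using this.symm

theorem IsMinValidFactor.adj_getVert_of_chord_reverse [Finite V] (hmin : IsMinValidFactor G H)
    (hc : OddCycleComp H c) {u : V} {P : H.Walk u u} (hP : P.IsCycle)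
    (hsupp : ∀ x, x ∈ P.support ↔ x ∈ c.supp) {k : ℕ} (hk : 2 ≤ k) (hkm : k + 2 ≤ P.length)
    (hchord : G.Adj u (P.getVert k)) :
    G.Adj (P.getVert (P.length - 1)) (P.getVert (k - 1)) ∧
      G.Adj (P.getVert (k + 1)) (P.getVert (k - 2)) := by
  have h := hmin.adj_getVert_of_chord hc hP.reverse (by simpa using hsupp) (k := P.length - k)
    (by omega) (by rw [Walk.length_reverse]; omega)
    (by simpa [Walk.getVert_reverse, Nat.sub_sub_self (show k ≤ P.length by omega)] using hchord)
  simp only [Walk.getVert_reverse] at h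
  rwa [show P.length - (P.length - k + 1) = k - 1 by omega,
    show P.length - (P.length - k - 1) = k + 1 by omega,
    show P.length - (P.length - k + 2) = k - 2 by omega] at h

end

/-- In a minimal valid factor, every odd cycle is chordless (induced) in G. -/
theorem stmt10 {V : Type*} [Fintype V] (G H : SimpleGraph V) (hG : IsCubic G)
    (hmin : IsMinValidFactor G H) (c : H.ConnectedComponent)
    (hc : OddCycleComp H c) (u v : V) (hu : u ∈ c.supp) (hv : v ∈ c.supp)
    (hadj : G.Adj u v) : H.Adj u v := by
  by_contra hHuv
  obtain ⟨P, hP, hsupp⟩ := hc.2.exists_isCycle hu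
  obtain ⟨r, hr⟩ : Odd P.length := by
    rw [← hP.ncard_support, show {x | x ∈ P.support} = c.supp from Set.ext hsupp,
      ← Nat.card_coe_set_eq]
    exact hc.1
  have hstep (i j : ℕ) (hi : i ≤ P.length) (hj : j ≤ P.length) (h : j = i + 1 ∨ i = j + 1) :
      G.Adj (P.getVert i) (P.getVert j) :=
    hmin.1.1.1 (P.adj_getVert_of_succ_or_pred hi hj h)
  obtain ⟨k, hk, hkm, rfl⟩ :=
    hP.exists_getVert_eq_of_not_adj ((hsupp v).mpr hv) hadj.ne.symm hHuv
  obtain ⟨h₁, h₂⟩ := hmin.adj_getVert_of_chord hc hP hsupp hk hkm hadj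
  obtain ⟨h₃, h₄⟩ := hmin.adj_getVert_of_chord_reverse hc hP hsupp hk hkm hadj
  have hkm3 : k + 3 = P.length := by
    rcases hG.eq_or_eq_of_adj (hstep (k - 1) (k - 2) (by omega) (by omega) (by omega))
      (hstep (k - 1) k (by omega) (by omega) (by omega)) h₃.symm h₂
      with h | h | h | h | h | h <;>
    rcases hP.getVert_eq_getVert (by omega) (by omega) h with h' | h' | h' <;> omega
  have hk3 : k = 3 := by
    rcases hG.eq_or_eq_of_adj (hstep (k + 1) k (by omega) (by omega) (by omega))
      (hstep (k + 1) (k + 2) (by omega) (by omega) (by omega)) h₁.symm h₄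
      with h | h | h | h | h | h <;>
    rcases hP.getVert_eq_getVert (by omega) (by omega) h with h' | h' | h' <;> omega
  omega
end

section
/- Let G be a cubic graph and P* a valid factor of G minimizing the number of components and, subject to that, the number of odd cycles. Suppose G contains an edge x y_i where x lies on an odd cycle C of P* and y_i is the i-th vertex of a path component P = y₁y₂⋯y_t of P*. Then i is even, t is odd, and moreover if i ≠ 2 then y₁y_{i-1} ∈ E(G), and if i ≠ t-1 then y_{i+1}y_t ∈ E(G). -/
open SimpleGraph

section Stmt11AuxSec
set_option linter.unusedSectionVars false
set_option linter.unusedVariables false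
set_option maxHeartbeats 1000000
namespace Stmt11Aux
section

variable {V : Type*}

/-- walks stay in closed sets -/
lemma walk_closed {H : SimpleGraph V} {S : Set V}
    (hS : ∀ u ∈ S, ∀ w, H.Adj u w → w ∈ S) :
    ∀ {a b : V}, H.Walk a b → a ∈ S → b ∈ S := by
  intro a b p
  induction p with
  | nil => exact id
  | cons h _ ih => intro ha; exact ih (hS _ ha _ h)

lemma mem_of_reachable_closed {H : SimpleGraph V} {S : Set V}
    (hS : ∀ u ∈ S, ∀ w, H.Adj u w → w ∈ S) {a b : V}
    (hab : H.Reachable a b) (ha : a ∈ S) : b ∈ S := by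
  obtain ⟨p⟩ := hab; exact walk_closed hS p ha

lemma supp_subset_closed {H : SimpleGraph V} {S : Set V} {w : V}
    (hS : ∀ u ∈ S, ∀ v, H.Adj u v → v ∈ S) (hw : w ∈ S) :
    (H.connectedComponentMk w).supp ⊆ S := by
  intro v hv
  rw [ConnectedComponent.mem_supp_iff] at hv
  exact mem_of_reachable_closed hS (ConnectedComponent.exact hv.symm) hw

lemma supp_closed {H : SimpleGraph V} (c : H.ConnectedComponent) :
    ∀ u ∈ c.supp, ∀ v, H.Adj u v → v ∈ c.supp := by
  intro u hu v huv
  rw [ConnectedComponent.mem_supp_iff] at hu ⊢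
  rw [← hu]
  exact (ConnectedComponent.connectedComponentMk_eq_of_adj huv).symm

lemma mem_supp_self {H : SimpleGraph V} (w : V) : w ∈ (H.connectedComponentMk w).supp := rfl

/-- transfer reachability along a closed set -/
lemma reachable_transfer {H K : SimpleGraph V} {S : Set V}
    (hcl : ∀ u ∈ S, ∀ w, H.Adj u w → w ∈ S)
    (h : ∀ u ∈ S, ∀ w, H.Adj u w → K.Reachable u w)
    {a b : V} (ha : a ∈ S) (hab : H.Reachable a b) : K.Reachable a b := by
  obtain ⟨p⟩ := hab
  induction p with
  | nil => exact Reachable.refl _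
  | @cons u v w hadj p ih => exact (h _ ha _ hadj).trans (ih (hcl _ ha _ hadj))

/-- component supp characterisation -/
lemma supp_eq {H : SimpleGraph V} {S : Set V} {w : V} (hw : w ∈ S)
    (hcl : ∀ u ∈ S, ∀ v, H.Adj u v → v ∈ S)
    (hre : ∀ v ∈ S, H.Reachable w v) :
    (H.connectedComponentMk w).supp = S := by
  refine subset_antisymm (supp_subset_closed hcl hw) ?_
  intro v hv
  rw [ConnectedComponent.mem_supp_iff]
  exact ConnectedComponent.sound (hre v hv).symm

lemma sdiff_edge_adj {H : SimpleGraph V} {a b u v : V} :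
    (H \ edge a b).Adj u v ↔ H.Adj u v ∧ ¬(u = a ∧ v = b ∨ u = b ∧ v = a) := by
  rw [sdiff_adj, edge_adj]
  constructor
  · rintro ⟨h1, h2⟩; exact ⟨h1, fun hp => h2 ⟨hp, h1.ne⟩⟩
  · rintro ⟨h1, h2⟩; exact ⟨h1, fun hp => h2 hp.1⟩

lemma sup_edge_adj' {H : SimpleGraph V} {a b u v : V} (hab : a ≠ b) :
    (H ⊔ edge a b).Adj u v ↔ H.Adj u v ∨ (u = a ∧ v = b ∨ u = b ∧ v = a) := by
  rw [sup_adj, edge_adj]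
  constructor
  · rintro (h | ⟨hp, _⟩)
    · exact Or.inl h
    · exact Or.inr hp
  · rintro (h | hp)
    · exact Or.inl h
    · refine Or.inr ⟨hp, ?_⟩
      rcases hp with ⟨rfl, rfl⟩ | ⟨rfl, rfl⟩
      · exact hab
      · exact hab.symm

lemma edge_le_of_adj {G : SimpleGraph V} {a b : V} (h : G.Adj a b) : edge a b ≤ G := by
  intro u v huv
  rw [edge_adj] at huv
  rcases huv with ⟨⟨rfl, rfl⟩ | ⟨rfl, rfl⟩, _⟩
  · exact h
  · exact h.symm

lemma sdiff_edge_sup {H : SimpleGraph V} {a b : V} (h : H.Adj a b) :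
    (H \ edge a b) ⊔ edge a b = H := sdiff_sup_cancel (edge_le_of_adj h)

/-- Reachability in a graph with one extra edge -/
lemma reachable_sup_edge {H : SimpleGraph V} {a b u v : V}
    (h : (H ⊔ edge a b).Reachable u v) :
    H.Reachable u v ∨ (H.Reachable u a ∧ H.Reachable b v) ∨
      (H.Reachable u b ∧ H.Reachable a v) := by
  obtain ⟨p⟩ := h
  induction p with
  | nil => exact Or.inl (Reachable.refl _)
  | @cons u w v hadj p ih =>
    rw [sup_adj, edge_adj] at hadj
    rcases hadj with hH | ⟨⟨rfl, rfl⟩ | ⟨rfl, rfl⟩, _⟩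
    · rcases ih with h1 | ⟨h1, h2⟩ | ⟨h1, h2⟩
      · exact Or.inl (hH.reachable.trans h1)
      · exact Or.inr (Or.inl ⟨hH.reachable.trans h1, h2⟩)
      · exact Or.inr (Or.inr ⟨hH.reachable.trans h1, h2⟩)
    · rcases ih with h1 | ⟨h1, h2⟩ | ⟨h1, h2⟩
      · exact Or.inr (Or.inl ⟨Reachable.refl _, h1⟩)
      · exact Or.inr (Or.inl ⟨Reachable.refl _, h2⟩)
      · exact Or.inl h2
    · rcases ih with h1 | ⟨h1, h2⟩ | ⟨h1, h2⟩
      · exact Or.inr (Or.inr ⟨Reachable.refl _, h1⟩)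
      · exact Or.inl h2
      · exact Or.inr (Or.inr ⟨Reachable.refl _, h2⟩)

/-- cardinality of the codomain of a surjection identifying exactly one pair -/
lemma card_of_surj_glue {α β : Type*} [Finite α] {f : α → β} (hs : Function.Surjective f)
    {x y : α} (hne : x ≠ y) (hxy : f x = f y)
    (hid : ∀ u v, f u = f v → u = v ∨ (u = x ∧ v = y) ∨ (u = y ∧ v = x)) :
    Nat.card β + 1 = Nat.card α := by
  classical
  have : Fintype α := Fintype.ofFinite α
  let g : {z : α // z ≠ y} → β := fun z => f z.1
  have hginj : Function.Injective g := by
    rintro ⟨z, hz⟩ ⟨z', hz'⟩ hzz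
    rcases hid z z' hzz with h | ⟨rfl, rfl⟩ | ⟨rfl, rfl⟩
    · exact Subtype.ext h
    · exact absurd rfl hz'
    · exact absurd rfl hz
  have hgsurj : Function.Surjective g := by
    intro b
    obtain ⟨z, rfl⟩ := hs b
    by_cases hzy : z = y
    · exact ⟨⟨x, hne⟩, by simp [g, hzy, hxy]⟩
    · exact ⟨⟨z, hzy⟩, rfl⟩
  have h1 : Nat.card {z : α // z ≠ y} = Nat.card β := Nat.card_eq_of_bijective g ⟨hginj, hgsurj⟩
  have h2 : Fintype.card {z : α // z ≠ y} = Fintype.card α - 1 := by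
    simp [Fintype.card_subtype_compl]
  have h3 : 1 ≤ Fintype.card α := Fintype.card_pos_iff.mpr ⟨x⟩
  rw [← h1]
  simp only [Nat.card_eq_fintype_card]
  omega


end
section

variable {V : Type*}



lemma nb_card_one {H : SimpleGraph V} {v w : V} [Finite V]
    (h : Nat.card (H.neighborSet v) = 1) (hadj : H.Adj v w) : H.neighborSet v = {w} := by
  rw [Nat.card_coe_set_eq, Set.ncard_eq_one] at h
  obtain ⟨a, ha⟩ := h
  have : w ∈ H.neighborSet v := hadj
  rw [ha] at this ⊢
  simp only [Set.mem_singleton_iff] at this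
  rw [this]

lemma nb_card_two {H : SimpleGraph V} {v w : V} [Finite V]
    (h : Nat.card (H.neighborSet v) = 2) (hadj : H.Adj v w) :
    ∃ w', w' ≠ w ∧ H.neighborSet v = {w, w'} := by
  rw [Nat.card_coe_set_eq, Set.ncard_eq_two] at h
  obtain ⟨a, b, hab, hs⟩ := h
  have hw : w ∈ H.neighborSet v := hadj
  rw [hs] at hw
  rcases hw with rfl | rfl
  · exact ⟨b, fun hb => hab hb.symm, hs⟩
  · exact ⟨a, fun ha => hab ha, by rw [hs, Set.pair_comm]⟩

lemma nb_card_two_pair {H : SimpleGraph V} {v w w' : V} [Finite V]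
    (h : Nat.card (H.neighborSet v) ≤ 2) (h1 : H.Adj v w) (h2 : H.Adj v w') (hne : w ≠ w') :
    H.neighborSet v = {w, w'} := by
  rw [Nat.card_coe_set_eq] at h
  refine (Set.eq_of_subset_of_ncard_le ?_ ?_ (Set.toFinite _)).symm
  · intro u hu
    rcases hu with rfl | rfl
    · exact h1
    · exact h2
  · rw [Set.ncard_pair hne]; exact h

lemma nb_exists {H : SimpleGraph V} {v : V} [Finite V]
    (h : 1 ≤ Nat.card (H.neighborSet v)) : ∃ w, H.Adj v w := by
  rw [Nat.card_coe_set_eq] at h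
  obtain ⟨w, hw⟩ := Set.nonempty_of_ncard_ne_zero (Nat.one_le_iff_ne_zero.mp h)
  exact ⟨w, hw⟩

lemma card_nb_singleton {H : SimpleGraph V} {v w : V} (h : H.neighborSet v = {w}) :
    Nat.card (H.neighborSet v) = 1 := by
  rw [Nat.card_coe_set_eq, h, Set.ncard_singleton]

lemma card_nb_pair {H : SimpleGraph V} {v w w' : V} (h : H.neighborSet v = {w, w'})
    (hne : w ≠ w') : Nat.card (H.neighborSet v) = 2 := by
  rw [Nat.card_coe_set_eq, h, Set.ncard_pair hne]

/-- delete one edge of a 2-regular component: endpoints remain connected -/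
lemma cycle_sdiff_reachable [Fintype V] {H : SimpleGraph V} {x w : V}
    (hdeg : ∀ v ∈ (H.connectedComponentMk x).supp, Nat.card (H.neighborSet v) = 2)
    (hadj : H.Adj x w) : (H \ edge x w).Reachable x w := by
  classical
  by_contra hnr
  set K := H \ edge x w with hK
  set S := {v | K.Reachable x v} with hSdef
  have hKle : K ≤ H := sdiff_le
  have hScl : ∀ u ∈ S, ∀ v, K.Adj u v → v ∈ S := fun u hu v huv => hu.trans huv.reachable
  have hxS : x ∈ S := Reachable.refl x
  have hwS : w ∉ S := hnr
  have hSsupp : S ⊆ (H.connectedComponentMk x).supp := by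
    intro v hv
    rw [ConnectedComponent.mem_supp_iff]
    exact ConnectedComponent.sound ((hv.mono hKle)).symm
  -- restriction of K to S, as a graph on V
  let K' : SimpleGraph V :=
    { Adj := fun u v => K.Adj u v ∧ u ∈ S ∧ v ∈ S
      symm := ⟨fun u v h => ⟨h.1.symm, h.2.2, h.2.1⟩⟩
      loopless := ⟨fun u h => K.loopless.irrefl u h.1⟩ }
  haveI : DecidableRel K'.Adj := Classical.decRel _
  have hnbS : ∀ v ∈ S, K'.neighborSet v = K.neighborSet v := by
    intro v hv
    ext u
    simp only [mem_neighborSet, K']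
    exact ⟨fun h => h.1, fun h => ⟨h, hv, hScl v hv u h⟩⟩
  have hnbNS : ∀ v, v ∉ S → K'.neighborSet v = ∅ := by
    intro v hv
    ext u
    simp only [mem_neighborSet, Set.mem_empty_iff_false, iff_false, K']
    exact fun h => hv h.2.1
  have hdegeq : ∀ v, K'.degree v = Nat.card (K'.neighborSet v) := by
    intro v
    rw [← card_neighborSet_eq_degree, Nat.card_eq_fintype_card]
  have hKnbx : K.neighborSet x = H.neighborSet x \ {w} := by
    ext u
    simp only [mem_neighborSet, hK, Set.mem_diff, Set.mem_singleton_iff]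
    rw [sdiff_adj, edge_adj]
    constructor
    · rintro ⟨h1, h2⟩
      exact ⟨h1, fun huw => h2 ⟨Or.inl ⟨rfl, huw⟩, h1.ne⟩⟩
    · rintro ⟨h1, h2⟩
      refine ⟨h1, ?_⟩
      rintro ⟨(⟨-, rfl⟩ | ⟨rfl, rfl⟩), hne⟩
      · exact h2 rfl
      · exact hadj.ne rfl
  have hKnb : ∀ v, v ≠ x → v ≠ w → K.neighborSet v = H.neighborSet v := by
    intro v hvx hvw
    ext u
    simp only [mem_neighborSet, hK]
    rw [sdiff_adj, edge_adj]
    constructor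
    · exact fun h => h.1
    · intro h
      refine ⟨h, ?_⟩
      rintro ⟨(⟨rfl, rfl⟩ | ⟨rfl, rfl⟩), -⟩
      · exact hvx rfl
      · exact hvw rfl
  have hodd : ∀ v, Odd (K'.degree v) ↔ v = x := by
    intro v
    by_cases hvS : v ∈ S
    · by_cases hvx : v = x
      · subst hvx
        rw [hdegeq, hnbS v hvS, hKnbx]
        have h2 : H.neighborSet v = {w} ∪ (H.neighborSet v \ {w}) := by
          rw [Set.union_diff_cancel]
          simpa using hadj
        have hcard : Nat.card (H.neighborSet v) = 2 := hdeg v rfl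
        rw [Nat.card_coe_set_eq] at hcard ⊢
        have : (H.neighborSet v \ {w}).ncard = 1 := by
          rw [Set.ncard_diff_singleton_of_mem (show w ∈ H.neighborSet v from hadj), hcard]
        rw [this]
        simp
      · simp only [hvx, iff_false]
        have hvw : v ≠ w := fun h => hwS (h ▸ hvS)
        rw [hdegeq, hnbS v hvS, hKnb v hvx hvw, hdeg v (hSsupp hvS)]
        decide
    · have hvx : v ≠ x := fun h => hvS (h ▸ hxS)
      simp only [hvx, iff_false]
      rw [hdegeq, hnbNS v hvS]
      simp
  have heven := K'.even_card_odd_degree_vertices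
  have : (Finset.univ.filter fun v => Odd (K'.degree v)) = {x} := by
    ext v
    simp [hodd]
  rw [this] at heven
  simp at heven


end
section

variable {V : Type*}





/-- components untouched by a modification keep their supp -/
lemma comp_transfer {H H' : SimpleGraph V} {T : Set V}
    (hagree : ∀ u w, u ∉ T → (H.Adj u w ↔ H'.Adj u w))
    {w : V} (hdisj : ∀ v ∈ (H.connectedComponentMk w).supp, v ∉ T) :
    (H'.connectedComponentMk w).supp = (H.connectedComponentMk w).supp := by
  set S := (H.connectedComponentMk w).supp with hS
  have hclH : ∀ u ∈ S, ∀ v, H.Adj u v → v ∈ S := supp_closed _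
  have hclH' : ∀ u ∈ S, ∀ v, H'.Adj u v → v ∈ S := by
    intro u hu v huv
    exact hclH u hu v ((hagree u v (hdisj u hu)).mpr huv)
  refine subset_antisymm (supp_subset_closed hclH' (mem_supp_self w)) ?_
  intro v hv
  rw [ConnectedComponent.mem_supp_iff]
  refine ConnectedComponent.sound (Reachable.symm ?_)
  refine reachable_transfer hclH ?_ (mem_supp_self w) ?_
  · intro u hu v' huv'
    exact ((hagree u v' (hdisj u hu)).mp huv').reachable
  · rw [ConnectedComponent.mem_supp_iff] at hv
    exact ConnectedComponent.exact hv.symm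

lemma nb_transfer {H H' : SimpleGraph V} {T : Set V}
    (hagree : ∀ u w, u ∉ T → (H.Adj u w ↔ H'.Adj u w)) {u : V} (hu : u ∉ T) :
    H.neighborSet u = H'.neighborSet u := by
  ext v
  exact hagree u v hu

lemma card_lt_of_inj_notmem {α β : Type*} [Finite β] (f : α → β) (hi : Function.Injective f)
    {b : β} (hb : b ∉ Set.range f) : Nat.card α < Nat.card β := by
  classical
  have : Fintype β := Fintype.ofFinite β
  have : Fintype α := Fintype.ofInjective f hi
  simp only [Nat.card_eq_fintype_card]
  exact Fintype.card_lt_of_injective_of_notMem f hi hb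

lemma chain_reachable {H : SimpleGraph V} (y : ℕ → V) (a : ℕ) :
    ∀ b, a ≤ b → (∀ k, a ≤ k → k < b → H.Adj (y k) (y (k + 1))) →
      H.Reachable (y a) (y b) := by
  intro b
  induction b with
  | zero => intro hab _; rw [Nat.le_zero] at hab; rw [hab]
  | succ n ih =>
    intro hab hch
    rcases Nat.lt_or_ge a (n + 1) with h | h
    · have h' : a ≤ n := by omega
      exact (ih h' fun k hk1 hk2 => hch k hk1 (by omega)).trans
        (hch n h' (by omega)).reachable
    · have : a = n + 1 := by omega
      rw [this]


end
section

variable {V : Type*}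





lemma numComponents_sup_edge_not_reach [Finite V] {H : SimpleGraph V} {a b : V} (hne : a ≠ b)
    (h : ¬H.Reachable a b) :
    numComponents (H ⊔ edge a b) + 1 = numComponents H := by
  set H' := H ⊔ edge a b with hH'
  have hle : H ≤ H' := le_sup_left
  refine card_of_surj_glue (f := fun c => c.map (Hom.ofLE hle))
    (x := H.connectedComponentMk a) (y := H.connectedComponentMk b) ?_ ?_ ?_ ?_
  · intro c'
    refine c'.ind ?_
    intro v
    exact ⟨H.connectedComponentMk v, rfl⟩
  · simp only [ne_eq, ConnectedComponent.eq]
    exact h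
  · show H'.connectedComponentMk a = H'.connectedComponentMk b
    refine ConnectedComponent.sound (Adj.reachable ?_)
    rw [hH', sup_adj, edge_adj]
    exact Or.inr ⟨Or.inl ⟨rfl, rfl⟩, hne⟩
  · intro c c'
    refine ConnectedComponent.ind₂ (fun u v huv => ?_) c c'
    have : H'.Reachable u v := ConnectedComponent.exact huv
    rcases reachable_sup_edge this with h1 | ⟨h1, h2⟩ | ⟨h1, h2⟩
    · exact Or.inl (ConnectedComponent.sound h1)
    · exact Or.inr (Or.inl ⟨ConnectedComponent.sound h1, ConnectedComponent.sound h2.symm⟩)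
    · exact Or.inr (Or.inr ⟨ConnectedComponent.sound h1, ConnectedComponent.sound h2.symm⟩)

lemma numComponents_sup_edge_reach [Finite V] {H : SimpleGraph V} {a b : V}
    (h : H.Reachable a b) :
    numComponents (H ⊔ edge a b) = numComponents H := by
  set H' := H ⊔ edge a b with hH'
  have hle : H ≤ H' := le_sup_left
  refine (Nat.card_eq_of_bijective (fun c : H.ConnectedComponent => c.map (Hom.ofLE hle))
    ⟨?_, ?_⟩).symm
  · intro c c' hcc
    induction c using ConnectedComponent.ind
    induction c' using ConnectedComponent.ind
    rename_i u v
    have : H'.Reachable u v := ConnectedComponent.exact hcc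
    rcases reachable_sup_edge this with h1 | ⟨h1, h2⟩ | ⟨h1, h2⟩
    · exact ConnectedComponent.sound h1
    · exact ConnectedComponent.sound ((h1.trans h).trans h2)
    · exact ConnectedComponent.sound ((h1.trans h.symm).trans h2)
  · intro c'
    refine c'.ind ?_
    intro v
    exact ⟨H.connectedComponentMk v, rfl⟩


end
section

variable {V : Type*}




/-- context: `y 1, …, y t` is a path component of `H` -/
structure PCtx [Fintype V] (H : SimpleGraph V) (t : ℕ) (y : ℕ → V) : Prop where
  ht : 1 ≤ t
  hinj : ∀ i j, 1 ≤ i → i ≤ t → 1 ≤ j → j ≤ t → y i = y j → i = j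
  hsupp : (H.connectedComponentMk (y 1)).supp = {v | ∃ i, 1 ≤ i ∧ i ≤ t ∧ y i = v}
  hadjP : ∀ i, 1 ≤ i → i < t → H.Adj (y i) (y (i+1))
  hend1 : Nat.card (H.neighborSet (y 1)) = 1
  hend2 : Nat.card (H.neighborSet (y t)) = 1

def Pset (t : ℕ) (y : ℕ → V) : Set V := y '' Set.Icc 1 t

namespace PCtx
variable [Fintype V] {H : SimpleGraph V} {t : ℕ} {y : ℕ → V} (hp : PCtx H t y)
include hp

lemma supp_eq_Pset : (H.connectedComponentMk (y 1)).supp = Pset t y := by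
  rw [hp.hsupp]
  ext v
  simp only [Pset, Set.mem_image, Set.mem_Icc, Set.mem_setOf_eq]
  constructor
  · rintro ⟨i, h1, h2, h3⟩; exact ⟨i, ⟨h1, h2⟩, h3⟩
  · rintro ⟨i, ⟨h1, h2⟩, h3⟩; exact ⟨i, h1, h2, h3⟩

lemma mem_P {j : ℕ} (h1 : 1 ≤ j) (h2 : j ≤ t) : y j ∈ Pset t y := ⟨j, ⟨h1, h2⟩, rfl⟩

lemma t2 : 2 ≤ t := by
  by_contra h
  have ht1 : t = 1 := by have := hp.ht; omega
  have h1 : Nat.card (H.neighborSet (y 1)) = 1 := hp.hend1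
  rw [Nat.card_coe_set_eq, Set.ncard_eq_one] at h1
  obtain ⟨z, hz⟩ := h1
  have hzadj : H.Adj (y 1) z := by
    have : z ∈ H.neighborSet (y 1) := by rw [hz]; rfl
    exact this
  have hzsupp : z ∈ (H.connectedComponentMk (y 1)).supp := by
    rw [ConnectedComponent.mem_supp_iff]
    exact (ConnectedComponent.connectedComponentMk_eq_of_adj hzadj).symm
  rw [hp.supp_eq_Pset] at hzsupp
  obtain ⟨j, ⟨hj1, hj2⟩, hj3⟩ := hzsupp
  have : j = 1 := by omega
  subst this
  rw [hj3] at hzadj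
  exact H.loopless.irrefl z hzadj

lemma adj_step {j : ℕ} (h1 : 1 ≤ j) (h2 : j < t) : H.Adj (y j) (y (j + 1)) := hp.hadjP j h1 h2

lemma ne_idx {j k : ℕ} (hj1 : 1 ≤ j) (hj2 : j ≤ t) (hk1 : 1 ≤ k) (hk2 : k ≤ t) (h : j ≠ k) :
    y j ≠ y k := fun he => h (hp.hinj j k hj1 hj2 hk1 hk2 he)

lemma nb_first : H.neighborSet (y 1) = {y 2} := by
  have := hp.t2
  have h := hp.adj_step (j := 1) le_rfl (by omega)
  exact nb_card_one hp.hend1 h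

lemma nb_last : H.neighborSet (y t) = {y (t - 1)} := by
  have h2 := hp.t2
  have h := hp.adj_step (j := t - 1) (by omega) (by omega)
  have he : t - 1 + 1 = t := by omega
  rw [he] at h
  exact nb_card_one hp.hend2 h.symm

lemma nb_mid {j : ℕ} (hd : Nat.card (H.neighborSet (y j)) ≤ 2) (h1 : 2 ≤ j) (h2 : j + 1 ≤ t) :
    H.neighborSet (y j) = {y (j - 1), y (j + 1)} := by
  have ha1 := hp.adj_step (j := j - 1) (by omega) (by omega)
  have he : j - 1 + 1 = j := by omega
  rw [he] at ha1
  have ha2 := hp.adj_step (j := j) (by omega) (by omega)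
  exact nb_card_two_pair hd ha1.symm ha2 (hp.ne_idx (by omega) (by omega) (by omega) (by omega)
    (by omega))

lemma P_closed (hd : ∀ v : V, Nat.card (H.neighborSet v) ≤ 2) :
    ∀ u ∈ Pset t y, ∀ w, H.Adj u w → w ∈ Pset t y := by
  rintro u ⟨j, ⟨hj1, hj2⟩, rfl⟩ w hw
  have t2 := hp.t2
  have hwmem : w ∈ H.neighborSet (y j) := hw
  rcases Nat.lt_or_ge j 2 with hj | hj
  · have : j = 1 := by omega
    subst this
    rw [hp.nb_first] at hwmem
    simp only [Set.mem_singleton_iff] at hwmem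
    subst hwmem
    exact hp.mem_P (by omega) (by omega)
  · rcases Nat.lt_or_ge j t with hjt | hjt
    · rw [hp.nb_mid (hd _) hj (by omega)] at hwmem
      rcases hwmem with rfl | rfl
      · exact hp.mem_P (by omega) (by omega)
      · exact hp.mem_P (by omega) (by omega)
    · have : j = t := by omega
      subst this
      rw [hp.nb_last] at hwmem
      simp only [Set.mem_singleton_iff] at hwmem
      subst hwmem
      exact hp.mem_P (by omega) (by omega)

lemma ncard_image {a b : ℕ} (ha : 1 ≤ a) (hb : b ≤ t) :
    (y '' Set.Icc a b).ncard = b + 1 - a := by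
  rw [Set.ncard_image_of_injOn, ← Finset.coe_Icc, Set.ncard_coe_finset, Nat.card_Icc]
  intro j hj k hk hjk
  simp only [Set.mem_Icc] at hj hk
  exact hp.hinj j k (by omega) (by omega) (by omega) (by omega) hjk

lemma rev : PCtx H t (fun j => y (t + 1 - j)) := by
  have t2 := hp.t2
  refine ⟨hp.ht, ?_, ?_, ?_, ?_, ?_⟩
  · intro i j hi1 hi2 hj1 hj2 he
    have := hp.hinj (t + 1 - i) (t + 1 - j) (by omega) (by omega) (by omega) (by omega) he
    omega
  · have h1 : t + 1 - 1 = t := by omega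
    rw [h1]
    have : H.connectedComponentMk (y t) = H.connectedComponentMk (y 1) := by
      rw [ConnectedComponent.eq]
      have : y t ∈ (H.connectedComponentMk (y 1)).supp := by
        rw [hp.supp_eq_Pset]; exact hp.mem_P (by omega) le_rfl
      rw [ConnectedComponent.mem_supp_iff] at this
      exact ConnectedComponent.exact this
    rw [this, hp.hsupp]
    ext v
    simp only [Set.mem_setOf_eq]
    constructor
    · rintro ⟨i, h1, h2, h3⟩
      exact ⟨t + 1 - i, by omega, by omega, by rw [show t + 1 - (t + 1 - i) = i by omega]; exact h3⟩
    · rintro ⟨i, h1, h2, h3⟩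
      exact ⟨t + 1 - i, by omega, by omega, h3⟩
  · intro i hi1 hi2
    have h := hp.adj_step (j := t - i) (by omega) (by omega)
    have e1 : t + 1 - i = t - i + 1 := by omega
    have e2 : t + 1 - (i + 1) = t - i := by omega
    rw [e1, e2]
    exact h.symm
  · show Nat.card (H.neighborSet (y (t + 1 - 1))) = 1
    rw [show t + 1 - 1 = t by omega]
    exact hp.hend2
  · show Nat.card (H.neighborSet (y (t + 1 - t))) = 1
    rw [show t + 1 - t = 1 by omega]
    exact hp.hend1

end PCtx

end
section

variable {V : Type*}




lemma untouched_valid_cond {G H H' : SimpleGraph V}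
    (hval : IsValidFactor G H) {T : Set V}
    (hagree : ∀ u w, u ∉ T → (H.Adj u w ↔ H'.Adj u w))
    (hTun : ∀ v ∈ T, (H.connectedComponentMk v).supp ⊆ T)
    {w : V} (hw : w ∉ T)
    (hodd : Odd (Nat.card ((H'.connectedComponentMk w).supp))) :
    ∀ u v : V, u ∈ (H'.connectedComponentMk w).supp → v ∈ (H'.connectedComponentMk w).supp →
      u ≠ v → Nat.card (H'.neighborSet u) = 1 → Nat.card (H'.neighborSet v) = 1 →
        ¬ G.Adj u v := by
  intro u v hu hv huv hdu hdv
  have hdisj : ∀ v ∈ (H.connectedComponentMk w).supp, v ∉ T := by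
    intro v hv hvT
    have h1 : (H.connectedComponentMk v).supp ⊆ T := hTun v hvT
    have h2 : H.connectedComponentMk v = H.connectedComponentMk w :=
      (ConnectedComponent.mem_supp_iff _ _).mp hv
    exact hw (h1 (by rw [h2]; exact mem_supp_self w))
  have hsupp' := comp_transfer hagree hdisj
  rw [hsupp'] at hu hv hodd
  have hnbu : H'.neighborSet u = H.neighborSet u := (nb_transfer hagree (hdisj u hu)).symm
  have hnbv : H'.neighborSet v = H.neighborSet v := (nb_transfer hagree (hdisj v hv)).symm
  rw [hnbu] at hdu
  rw [hnbv] at hdv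
  exact hval.2.2 (H.connectedComponentMk w) hodd u v hu hv huv hdu hdv

end

end Stmt11Aux
namespace Stmt11Aux

lemma lemA {V : Type*} [Fintype V] {G H : SimpleGraph V} (hmin : IsMinValidFactor G H)
    {t : ℕ} {y : ℕ → V} (hp : PCtx H t y)
    {C' : H.ConnectedComponent} (hC' : OddCycleComp H C') {x' : V} (hx' : x' ∈ C'.supp)
    (hGadj : G.Adj x' (y 1)) : False := by
  classical
  obtain ⟨⟨⟨hHG, hdeg12, hoddc⟩, hmc⟩, -⟩ := hmin
  have hd2 : ∀ v : V, Nat.card (H.neighborSet v) ≤ 2 := fun v => (hdeg12 v).2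
  have t2 := hp.t2
  have hCdeg : ∀ v ∈ C'.supp, Nat.card (H.neighborSet v) = 2 := hC'.2
  have hCcl := supp_closed C'
  -- C'.supp and the path are disjoint
  have hCP : ∀ v, v ∈ C'.supp → v ∉ Pset t y := by
    intro v hv hvP
    have h1 : H.connectedComponentMk v = C' := (ConnectedComponent.mem_supp_iff _ _).mp hv
    have h2 : v ∈ (H.connectedComponentMk (y 1)).supp := by rw [hp.supp_eq_Pset]; exact hvP
    have h3 : H.connectedComponentMk v = H.connectedComponentMk (y 1) :=
      (ConnectedComponent.mem_supp_iff _ _).mp h2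
    have h4 : y 1 ∈ C'.supp := by
      rw [ConnectedComponent.mem_supp_iff, ← h3, h1]
    have h5 := hCdeg _ h4
    have h6 := hp.hend1
    omega
  have hx'P : x' ∉ Pset t y := hCP x' hx'
  have hx'y1 : x' ≠ y 1 := fun h => hx'P (h ▸ hp.mem_P le_rfl (by omega))
  -- second neighbour of x' on the cycle
  obtain ⟨xp, hxp⟩ := nb_exists (v := x') (H := H) (by rw [hCdeg x' hx']; omega)
  have hxpC : xp ∈ C'.supp := hCcl x' hx' xp hxp
  have hxpP : xp ∉ Pset t y := hCP xp hxpC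
  have hxpy1 : xp ≠ y 1 := fun h => hxpP (h ▸ hp.mem_P le_rfl (by omega))
  have hxpyt : xp ≠ y t := fun h => hxpP (h ▸ hp.mem_P (by omega) le_rfl)
  have hx'xp : x' ≠ xp := hxp.ne
  set K := H \ edge x' xp with hK
  have hKadj : ∀ u v, K.Adj u v ↔ H.Adj u v ∧ ¬(u = x' ∧ v = xp ∨ u = xp ∧ v = x') :=
    fun u v => sdiff_edge_adj
  have hKle : K ≤ H := sdiff_le
  have hKr : K.Reachable x' xp := by
    refine cycle_sdiff_reachable ?_ hxp
    intro v hv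
    refine hCdeg v ?_
    rwa [(ConnectedComponent.mem_supp_iff _ _).mp hx'] at hv
  have hHKsup : K ⊔ edge x' xp = H := sdiff_edge_sup hxp
  have hcK : numComponents K = numComponents H := by
    conv_rhs => rw [← hHKsup]
    exact (numComponents_sup_edge_reach hKr).symm
  set HA := K ⊔ edge x' (y 1) with hHA
  have hPclH := hp.P_closed hd2
  have hPclK : ∀ u ∈ Pset t y, ∀ w, K.Adj u w → w ∈ Pset t y :=
    fun u hu w hw => hPclH u hu w (hKle hw)
  have hnr : ¬K.Reachable x' (y 1) := by
    intro h
    exact hx'P (mem_of_reachable_closed hPclK h.symm (hp.mem_P le_rfl (by omega)))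
  have hcHA : numComponents HA + 1 = numComponents H := by
    rw [← hcK]
    exact numComponents_sup_edge_not_reach hx'y1 hnr
  have hAadj : ∀ u v, HA.Adj u v ↔
      (H.Adj u v ∧ ¬(u = x' ∧ v = xp ∨ u = xp ∧ v = x')) ∨
        (u = x' ∧ v = y 1 ∨ u = y 1 ∧ v = x') := by
    intro u v
    rw [hHA, sup_edge_adj' hx'y1, hKadj]
  -- adjacency between cycle and path is impossible in H
  have hnadjCP : ∀ u ∈ C'.supp, ∀ w ∈ Pset t y, ¬H.Adj u w := by
    intro u hu w hw hadj
    exact hCP w (hCcl u hu w hadj) hw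
  -- neighbour sets in HA
  obtain ⟨x2, hx2ne, hx2set⟩ := nb_card_two (hCdeg x' hx') hxp
  have hx2C : x2 ∈ C'.supp := by
    refine hCcl x' hx' x2 ?_
    have : x2 ∈ H.neighborSet x' := by rw [hx2set]; right; rfl
    exact this
  obtain ⟨z, hzne, hzset⟩ := nb_card_two (hCdeg xp hxpC) hxp.symm
  have hzC : z ∈ C'.supp := by
    refine hCcl xp hxpC z ?_
    have : z ∈ H.neighborSet xp := by rw [hzset]; right; rfl
    exact this
  have hnbx' : HA.neighborSet x' = {x2, y 1} := by
    ext u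
    rw [mem_neighborSet, hAadj]
    rw [Set.mem_insert_iff, Set.mem_singleton_iff]
    constructor
    · rintro (⟨h1, h2⟩ | ⟨⟨-, rfl⟩ | ⟨h3, -⟩⟩)
      · have : u ∈ H.neighborSet x' := h1
        rw [hx2set] at this
        rcases this with rfl | rfl
        · exact absurd (Or.inl ⟨rfl, rfl⟩) h2
        · exact Or.inl rfl
      · exact Or.inr rfl
      · exact absurd h3 hx'y1
    · rintro (rfl | rfl)
      · refine Or.inl ⟨?_, ?_⟩
        · have : u ∈ H.neighborSet x' := by rw [hx2set]; right; rfl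
          exact this
        · rintro (⟨-, rfl⟩ | ⟨rfl, -⟩)
          · exact hx2ne rfl
          · exact hx'xp rfl
      · exact Or.inr (Or.inl ⟨rfl, rfl⟩)
  have hnbxp : HA.neighborSet xp = {z} := by
    ext u
    rw [mem_neighborSet, hAadj]
    rw [Set.mem_singleton_iff]
    constructor
    · rintro (⟨h1, h2⟩ | ⟨⟨h3, -⟩ | ⟨h3, -⟩⟩)
      · have : u ∈ H.neighborSet xp := h1
        rw [hzset] at this
        rcases this with rfl | rfl
        · exact absurd (Or.inr ⟨rfl, rfl⟩) h2
        · rfl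
      · exact absurd h3 (fun h => hx'xp h.symm)
      · exact absurd h3 hxpy1
    · rintro rfl
      refine Or.inl ⟨?_, ?_⟩
      · have : u ∈ H.neighborSet xp := by rw [hzset]; right; rfl
        exact this
      · rintro (⟨rfl, -⟩ | ⟨-, rfl⟩)
        · exact hx'xp rfl
        · exact hzne rfl
  have hnby1 : HA.neighborSet (y 1) = {y 2, x'} := by
    ext u
    rw [mem_neighborSet, hAadj]
    rw [Set.mem_insert_iff, Set.mem_singleton_iff]
    constructor
    · rintro (⟨h1, -⟩ | ⟨⟨h3, -⟩ | ⟨-, rfl⟩⟩)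
      · have : u ∈ H.neighborSet (y 1) := h1
        rw [hp.nb_first] at this
        exact Or.inl this
      · exact absurd h3.symm hx'y1
      · exact Or.inr rfl
    · rintro (rfl | rfl)
      · refine Or.inl ⟨hp.adj_step le_rfl (by omega), ?_⟩
        rintro (⟨h5, -⟩ | ⟨h5, -⟩)
        · exact hx'y1 h5.symm
        · exact hxpy1 h5.symm
      · exact Or.inr (Or.inr ⟨rfl, rfl⟩)
  have hnbother : ∀ v, v ≠ x' → v ≠ xp → v ≠ y 1 → HA.neighborSet v = H.neighborSet v := by
    intro v h1 h2 h3
    ext u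
    rw [mem_neighborSet, mem_neighborSet, hAadj]
    constructor
    · rintro (⟨h4, -⟩ | ⟨⟨h5, -⟩ | ⟨h5, -⟩⟩)
      · exact h4
      · exact absurd h5 h1
      · exact absurd h5 h3
    · intro h4
      refine Or.inl ⟨h4, ?_⟩
      rintro (⟨rfl, -⟩ | ⟨rfl, -⟩)
      · exact h1 rfl
      · exact h2 rfl
  -- the merged component M
  set M : Set V := C'.supp ∪ Pset t y with hM
  have hx'M : x' ∈ M := Or.inl hx'
  have hMcl : ∀ u ∈ M, ∀ w, HA.Adj u w → w ∈ M := by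
    rintro u hu w hw
    rw [hAadj] at hw
    rcases hw with ⟨h1, -⟩ | ⟨⟨-, rfl⟩ | ⟨-, rfl⟩⟩
    · rcases hu with hu | hu
      · exact Or.inl (hCcl u hu w h1)
      · exact Or.inr (hPclH u hu w h1)
    · exact Or.inr (hp.mem_P le_rfl (by omega))
    · exact Or.inl hx'
  have hyNE : ∀ k, 1 ≤ k → k ≤ t → y k ≠ x' ∧ y k ≠ xp := by
    intro k h1 h2
    constructor
    · intro h; exact hx'P (h ▸ hp.mem_P h1 h2)
    · intro h; exact hxpP (h ▸ hp.mem_P h1 h2)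
  have hchainHA : ∀ k, 1 ≤ k → k < t → HA.Adj (y k) (y (k + 1)) := by
    intro k h1 h2
    rw [hAadj]
    refine Or.inl ⟨hp.adj_step h1 h2, ?_⟩
    rintro (⟨h3, -⟩ | ⟨h3, -⟩)
    · exact (hyNE k h1 (by omega)).1 h3
    · exact (hyNE k h1 (by omega)).2 h3
  have hreachy : ∀ j, 1 ≤ j → j ≤ t → HA.Reachable (y 1) (y j) := by
    intro j h1 h2
    exact chain_reachable y 1 j h1 (fun k hk1 hk2 => hchainHA k hk1 (by omega))
  have hKleHA : K ≤ HA := le_sup_left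
  have hAxy1 : HA.Adj x' (y 1) := by
    rw [hAadj]; exact Or.inr (Or.inl ⟨rfl, rfl⟩)
  have hstep : ∀ u ∈ C'.supp, ∀ w, H.Adj u w → HA.Reachable u w := by
    intro u hu w hw
    by_cases hpair : u = x' ∧ w = xp ∨ u = xp ∧ w = x'
    · rcases hpair with ⟨rfl, rfl⟩ | ⟨rfl, rfl⟩
      · exact (hKr.mono hKleHA)
      · exact (hKr.mono hKleHA).symm
    · refine Adj.reachable ?_
      exact hKleHA ((hKadj u w).mpr ⟨hw, hpair⟩)
  have hMsupp : (HA.connectedComponentMk x').supp = M := by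
    refine supp_eq hx'M hMcl ?_
    rintro v (hv | hv)
    · refine reachable_transfer hCcl hstep hx' ?_
      have h1 : H.connectedComponentMk x' = C' := (ConnectedComponent.mem_supp_iff _ _).mp hx'
      have h2 : H.connectedComponentMk v = C' := (ConnectedComponent.mem_supp_iff _ _).mp hv
      exact ConnectedComponent.exact (h1.trans h2.symm)
    · obtain ⟨j, ⟨hj1, hj2⟩, rfl⟩ := hv
      exact hAxy1.reachable.trans (hreachy j hj1 hj2)
  have hx2y1 : x2 ≠ y 1 := fun h => (hCP x2 hx2C) (h ▸ hp.mem_P le_rfl (by omega))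
  have hy2x' : y 2 ≠ x' := fun h => hx'P (h ▸ hp.mem_P (by omega) (by omega))
  have hdegHA : ∀ v : V, 1 ≤ Nat.card (HA.neighborSet v) ∧ Nat.card (HA.neighborSet v) ≤ 2 := by
    intro v
    by_cases h1 : v = x'
    · subst h1; rw [card_nb_pair hnbx' hx2y1]; omega
    · by_cases h2 : v = xp
      · subst h2; rw [card_nb_singleton hnbxp]; omega
      · by_cases h3 : v = y 1
        · subst h3; rw [card_nb_pair hnby1 hy2x']; omega
        · rw [hnbother v h1 h2 h3]; exact hdeg12 v
  have hagree : ∀ u w, u ∉ M → (H.Adj u w ↔ HA.Adj u w) := by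
    intro u w hu
    have h1 : u ≠ x' := fun h => hu (h ▸ hx'M)
    have h2 : u ≠ xp := fun h => hu (h ▸ Or.inl hxpC)
    have h3 : u ≠ y 1 := fun h => hu (h ▸ Or.inr (hp.mem_P le_rfl (by omega)))
    rw [← mem_neighborSet, ← mem_neighborSet, hnbother u h1 h2 h3]
  have hTun : ∀ v ∈ M, (H.connectedComponentMk v).supp ⊆ M := by
    rintro v (hv | hv)
    · have h1 : H.connectedComponentMk v = C' := (ConnectedComponent.mem_supp_iff _ _).mp hv
      rw [h1]; exact fun u hu => Or.inl hu
    · obtain ⟨j, ⟨hj1, hj2⟩, rfl⟩ := hv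
      have h1 : H.connectedComponentMk (y j) = H.connectedComponentMk (y 1) := by
        have := hp.supp_eq_Pset ▸ hp.mem_P hj1 hj2
        exact (ConnectedComponent.mem_supp_iff _ _).mp this
      rw [h1, hp.supp_eq_Pset]; exact fun u hu => Or.inr hu
  have hytx' : y t ≠ x' := (hyNE t (by omega) le_rfl).1
  have hdeg1M : ∀ u ∈ M, Nat.card (HA.neighborSet u) = 1 → u = xp ∨ u = y t := by
    rintro u (hu | hu) hcard
    · by_cases h1 : u = x'
      · subst h1; rw [card_nb_pair hnbx' hx2y1] at hcard; omega
      · by_cases h2 : u = xp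
        · exact Or.inl h2
        · exfalso
          have h3 : u ≠ y 1 := fun h => (hCP u hu) (h ▸ hp.mem_P le_rfl (by omega))
          rw [hnbother u h1 h2 h3, hCdeg u hu] at hcard
          omega
    · obtain ⟨j, ⟨hj1, hj2⟩, rfl⟩ := hu
      by_cases hjt : j = t
      · exact Or.inr (by rw [hjt])
      · exfalso
        by_cases hj1' : j = 1
        · subst hj1'
          rw [card_nb_pair hnby1 hy2x'] at hcard; omega
        · have h1 := (hyNE j hj1 hj2).1
          have h2 := (hyNE j hj1 hj2).2
          have h3 : y j ≠ y 1 := hp.ne_idx hj1 hj2 le_rfl (by omega) hj1'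
          rw [hnbother _ h1 h2 h3] at hcard
          have h4 := hp.nb_mid (j := j) (hd2 _) (by omega) (by omega)
          rw [card_nb_pair h4 (hp.ne_idx (by omega) (by omega) (by omega) (by omega)
            (by omega))] at hcard
          omega
  have hvalrest := And.intro hHG (And.intro hdeg12 hoddc)
  -- case split on the chord
  by_cases hGxp : G.Adj xp (y t)
  · -- close up into a single cycle
    set HA2 := HA ⊔ edge xp (y t) with hHA2
    have hreachxpyt : HA.Reachable xp (y t) :=
      ((hKr.mono hKleHA).symm.trans hAxy1.reachable).trans (hreachy t (by omega) le_rfl)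
    have hc2 : numComponents HA2 = numComponents HA := numComponents_sup_edge_reach hreachxpyt
    have hA2adj : ∀ u v, HA2.Adj u v ↔
        HA.Adj u v ∨ (u = xp ∧ v = y t ∨ u = y t ∧ v = xp) :=
      fun u v => sup_edge_adj' hxpyt
    have hyt1 : y t ≠ y 1 := hp.ne_idx (by omega) le_rfl le_rfl (by omega) (by omega)
    have hnb2other : ∀ v, v ≠ xp → v ≠ y t → HA2.neighborSet v = HA.neighborSet v := by
      intro v h1 h2
      ext u
      rw [mem_neighborSet, mem_neighborSet, hA2adj]
      constructor
      · rintro (h3 | ⟨⟨h4, -⟩ | ⟨h4, -⟩⟩)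
        · exact h3
        · exact absurd h4 h1
        · exact absurd h4 h2
      · exact fun h3 => Or.inl h3
    have hnb2xp : HA2.neighborSet xp = {z, y t} := by
      ext u
      rw [mem_neighborSet, hA2adj]
      rw [Set.mem_insert_iff, Set.mem_singleton_iff]
      constructor
      · rintro (h3 | ⟨⟨-, rfl⟩ | ⟨h4, -⟩⟩)
        · have : u ∈ HA.neighborSet xp := h3
          rw [hnbxp] at this
          exact Or.inl this
        · exact Or.inr rfl
        · exact absurd h4 hxpyt
      · rintro (rfl | rfl)
        · exact Or.inl (by rw [← mem_neighborSet, hnbxp]; rfl)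
        · exact Or.inr (Or.inl ⟨rfl, rfl⟩)
    have hnbHAyt : HA.neighborSet (y t) = {y (t - 1)} := by
      rw [hnbother _ hytx' (fun h => hxpyt h.symm) hyt1, hp.nb_last]
    have hnb2yt : HA2.neighborSet (y t) = {y (t - 1), xp} := by
      ext u
      rw [mem_neighborSet, hA2adj]
      rw [Set.mem_insert_iff, Set.mem_singleton_iff]
      constructor
      · rintro (h3 | ⟨⟨h4, -⟩ | ⟨-, rfl⟩⟩)
        · have : u ∈ HA.neighborSet (y t) := h3
          rw [hnbHAyt] at this
          exact Or.inl this
        · exact absurd h4 hxpyt.symm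
        · exact Or.inr rfl
      · rintro (rfl | rfl)
        · exact Or.inl (by rw [← mem_neighborSet, hnbHAyt]; rfl)
        · exact Or.inr (Or.inr ⟨rfl, rfl⟩)
    have hzyt : z ≠ y t := fun h => (hCP z hzC) (h ▸ hp.mem_P (by omega) le_rfl)
    have hyt1xp : y (t - 1) ≠ xp := fun h => hxpP (h ▸ hp.mem_P (by omega) (by omega))
    have hdegHA2 : ∀ v : V, 1 ≤ Nat.card (HA2.neighborSet v) ∧
        Nat.card (HA2.neighborSet v) ≤ 2 := by
      intro v
      by_cases h1 : v = xp
      · subst h1; rw [card_nb_pair hnb2xp hzyt]; omega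
      · by_cases h2 : v = y t
        · subst h2; rw [card_nb_pair hnb2yt hyt1xp]; omega
        · rw [hnb2other v h1 h2]; exact hdegHA v
    have hMcl2 : ∀ u ∈ M, ∀ w, HA2.Adj u w → w ∈ M := by
      rintro u hu w hw
      rw [hA2adj] at hw
      rcases hw with h1 | ⟨⟨-, rfl⟩ | ⟨-, rfl⟩⟩
      · exact hMcl u hu w h1
      · exact Or.inr (hp.mem_P (by omega) le_rfl)
      · exact Or.inl hxpC
    have hMsupp2 : (HA2.connectedComponentMk x').supp = M := by
      refine supp_eq hx'M hMcl2 ?_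
      intro v hv
      have h1 : HA.Reachable x' v := by
        have := hMsupp ▸ hv
        exact ConnectedComponent.exact ((ConnectedComponent.mem_supp_iff _ _).mp this).symm
      exact h1.mono le_sup_left
    have hagree2 : ∀ u w, u ∉ M → (H.Adj u w ↔ HA2.Adj u w) := by
      intro u w hu
      have h1 : u ≠ xp := fun h => hu (h ▸ Or.inl hxpC)
      have h2 : u ≠ y t := fun h => hu (h ▸ Or.inr (hp.mem_P (by omega) le_rfl))
      rw [hagree u w hu, ← mem_neighborSet, ← mem_neighborSet, hnb2other u h1 h2]
    have hvalHA2 : IsValidFactor G HA2 := by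
      refine ⟨?_, hdegHA2, ?_⟩
      · rw [hHA2, hHA]
        exact sup_le (sup_le (hKle.trans hHG) (edge_le_of_adj hGadj)) (edge_le_of_adj hGxp)
      · intro c
        induction c using ConnectedComponent.ind
        rename_i w
        intro hodd u v hu hv huv hdu hdv
        by_cases hwM : w ∈ M
        · exfalso
          have hcomp : HA2.connectedComponentMk w = HA2.connectedComponentMk x' := by
            have := hMsupp2 ▸ hwM
            exact (ConnectedComponent.mem_supp_iff _ _).mp this
          rw [hcomp, hMsupp2] at hu
          by_cases h1 : u = xp
          · subst h1; rw [card_nb_pair hnb2xp hzyt] at hdu; omega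
          · by_cases h2 : u = y t
            · subst h2; rw [card_nb_pair hnb2yt hyt1xp] at hdu; omega
            · rw [hnb2other u h1 h2] at hdu
              rcases hdeg1M u hu hdu with rfl | rfl
              · exact h1 rfl
              · exact h2 rfl
        · exact untouched_valid_cond hvalrest hagree2 hTun hwM hodd u v hu hv huv hdu hdv
    have := hmc HA2 hvalHA2
    omega
  · -- HA itself is a valid factor
    have hvalHA : IsValidFactor G HA := by
      refine ⟨?_, hdegHA, ?_⟩
      · rw [hHA]
        exact sup_le (hKle.trans hHG) (edge_le_of_adj hGadj)
      · intro c
        induction c using ConnectedComponent.ind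
        rename_i w
        intro hodd u v hu hv huv hdu hdv
        by_cases hwM : w ∈ M
        · have hcomp : HA.connectedComponentMk w = HA.connectedComponentMk x' := by
            have := hMsupp ▸ hwM
            exact (ConnectedComponent.mem_supp_iff _ _).mp this
          rw [hcomp, hMsupp] at hu hv
          rcases hdeg1M u hu hdu with rfl | rfl
          · rcases hdeg1M v hv hdv with rfl | rfl
            · exact absurd rfl huv
            · exact fun h => hGxp h
          · rcases hdeg1M v hv hdv with rfl | rfl
            · exact fun h => hGxp h.symm
            · exact absurd rfl huv
        · exact untouched_valid_cond hvalrest hagree hTun hwM hodd u v hu hv huv hdu hdv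
    have := hmc HA hvalHA
    omega


lemma core {V : Type*} [Fintype V] {G H : SimpleGraph V} (hmin : IsMinValidFactor G H)
    {t : ℕ} {y : ℕ → V} (hp : PCtx H t y)
    {C : H.ConnectedComponent} (hC : OddCycleComp H C) {x : V} (hx : x ∈ C.supp)
    {i : ℕ} (hi1 : 1 ≤ i) (hit : i ≤ t) (hedge : G.Adj x (y i))
    (hsafe : Odd (i - 1) → i ≠ 2 ∧ ¬ G.Adj (y 1) (y (i - 1))) : False := by
  classical
  obtain ⟨⟨⟨hHG, hdeg12, hoddc⟩, hmc⟩, hmo⟩ := hmin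
  have hd2 : ∀ v : V, Nat.card (H.neighborSet v) ≤ 2 := fun v => (hdeg12 v).2
  have t2 := hp.t2
  have hCdeg : ∀ v ∈ C.supp, Nat.card (H.neighborSet v) = 2 := hC.2
  have hCcl := supp_closed C
  have hCP : ∀ v, v ∈ C.supp → v ∉ Pset t y := by
    intro v hv hvP
    have h1 : H.connectedComponentMk v = C := (ConnectedComponent.mem_supp_iff _ _).mp hv
    have h2 : v ∈ (H.connectedComponentMk (y 1)).supp := by rw [hp.supp_eq_Pset]; exact hvP
    have h3 : H.connectedComponentMk v = H.connectedComponentMk (y 1) :=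
      (ConnectedComponent.mem_supp_iff _ _).mp h2
    have h4 : y 1 ∈ C.supp := by
      rw [ConnectedComponent.mem_supp_iff, ← h3, h1]
    have h5 := hCdeg _ h4
    have h6 := hp.hend1
    omega
  have hCmk : OddCycleComp H (H.connectedComponentMk x) := by
    rwa [(ConnectedComponent.mem_supp_iff _ _).mp hx]
  -- i ≠ 1 and i ≠ t by lemA
  have hi1' : i ≠ 1 := by
    intro h
    exact lemA ⟨⟨⟨hHG, hdeg12, hoddc⟩, hmc⟩, hmo⟩ hp hCmk (mem_supp_self x) (h ▸ hedge)
  have hit' : i ≠ t := by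
    intro h
    refine lemA ⟨⟨⟨hHG, hdeg12, hoddc⟩, hmc⟩, hmo⟩ hp.rev hCmk (mem_supp_self x) ?_
    show G.Adj x (y (t + 1 - 1))
    rw [show t + 1 - 1 = t by omega, ← h]
    exact hedge
  have hi2' : i ≠ 2 := by
    intro h
    exact (hsafe (by rw [h]; decide)).1 h
  have hi3 : 3 ≤ i := by omega
  have hilt : i < t := by omega
  have t4 : 4 ≤ t := by omega
  have hxP : x ∉ Pset t y := hCP x hx
  have hyNE : ∀ k, 1 ≤ k → k ≤ t → y k ≠ x := by
    intro k h1 h2 h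
    exact hxP (h ▸ hp.mem_P h1 h2)
  -- second cycle neighbour of x
  obtain ⟨xp, hxp⟩ := nb_exists (v := x) (H := H) (by rw [hCdeg x hx]; omega)
  have hxpC : xp ∈ C.supp := hCcl x hx xp hxp
  have hxpP : xp ∉ Pset t y := hCP xp hxpC
  have hyNExp : ∀ k, 1 ≤ k → k ≤ t → y k ≠ xp := by
    intro k h1 h2 h
    exact hxpP (h ▸ hp.mem_P h1 h2)
  have hxxp : x ≠ xp := hxp.ne
  set K := H \ edge x xp with hK
  have hKadj : ∀ u v, K.Adj u v ↔ H.Adj u v ∧ ¬(u = x ∧ v = xp ∨ u = xp ∧ v = x) :=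
    fun u v => sdiff_edge_adj
  have hKle : K ≤ H := sdiff_le
  have hKr : K.Reachable x xp := by
    refine cycle_sdiff_reachable ?_ hxp
    intro v hv
    refine hCdeg v ?_
    rwa [(ConnectedComponent.mem_supp_iff _ _).mp hx] at hv
  have hHKsup : K ⊔ edge x xp = H := sdiff_edge_sup hxp
  have hcK : numComponents K = numComponents H := by
    conv_rhs => rw [← hHKsup]
    exact (numComponents_sup_edge_reach hKr).symm
  -- remove the path edge y_{i-1} y_i
  have hadjy : H.Adj (y (i - 1)) (y i) := by
    have h := hp.adj_step (j := i - 1) (by omega) (by omega)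
    rwa [show i - 1 + 1 = i by omega] at h
  have hKyadj : K.Adj (y (i - 1)) (y i) := by
    rw [hKadj]
    refine ⟨hadjy, ?_⟩
    rintro (⟨h1, -⟩ | ⟨h1, -⟩)
    · exact hyNE (i - 1) (by omega) (by omega) h1
    · exact hyNExp (i - 1) (by omega) (by omega) h1
  set H0 := K \ edge (y (i - 1)) (y i) with hH0
  have hH0K : H0 ⊔ edge (y (i - 1)) (y i) = K := sdiff_edge_sup hKyadj
  have hH0adj : ∀ u v, H0.Adj u v ↔
      (H.Adj u v ∧ ¬(u = x ∧ v = xp ∨ u = xp ∧ v = x)) ∧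
        ¬(u = y (i - 1) ∧ v = y i ∨ u = y i ∧ v = y (i - 1)) := by
    intro u v
    rw [hH0, sdiff_edge_adj, hKadj]
  have hH0le : H0 ≤ H := fun u v h => ((hH0adj u v).mp h).1.1
  -- left and right pieces of the path
  set Ql : Set V := y '' Set.Icc 1 (i - 1) with hQl
  set Qr : Set V := y '' Set.Icc i t with hQr
  have hQlP : Ql ⊆ Pset t y := by
    rintro v ⟨j, hj, rfl⟩
    simp only [Set.mem_Icc] at hj
    exact hp.mem_P (by omega) (by omega)
  have hQrP : Qr ⊆ Pset t y := by
    rintro v ⟨j, hj, rfl⟩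
    simp only [Set.mem_Icc] at hj
    exact hp.mem_P (by omega) (by omega)
  have hQlcl : ∀ u ∈ Ql, ∀ w, H0.Adj u w → w ∈ Ql := by
    rintro u ⟨j, hj, rfl⟩ w hw
    simp only [Set.mem_Icc] at hj
    rw [hH0adj] at hw
    obtain ⟨⟨h1, -⟩, h2⟩ := hw
    have hwmem : w ∈ H.neighborSet (y j) := h1
    rcases Nat.lt_or_ge j 2 with hj2 | hj2
    · have hj1 : j = 1 := by omega
      subst hj1
      rw [hp.nb_first] at hwmem
      simp only [Set.mem_singleton_iff] at hwmem
      subst hwmem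
      exact ⟨2, by simp only [Set.mem_Icc]; omega, rfl⟩
    · rcases Nat.lt_or_ge j (i - 1) with hj3 | hj3
      · rw [hp.nb_mid (j := j) (hd2 _) (by omega) (by omega)] at hwmem
        rcases hwmem with rfl | rfl
        · exact ⟨j - 1, by simp only [Set.mem_Icc]; omega, rfl⟩
        · exact ⟨j + 1, by simp only [Set.mem_Icc]; omega, rfl⟩
      · have hj4 : j = i - 1 := by omega
        subst hj4
        rw [hp.nb_mid (j := i - 1) (hd2 _) (by omega) (by omega)] at hwmem
        rw [show i - 1 + 1 = i by omega] at hwmem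
        rcases hwmem with rfl | rfl
        · exact ⟨i - 1 - 1, by simp only [Set.mem_Icc]; omega, rfl⟩
        · exact absurd (Or.inl ⟨rfl, rfl⟩) h2
  have hQrcl : ∀ u ∈ Qr, ∀ w, H0.Adj u w → w ∈ Qr := by
    rintro u ⟨j, hj, rfl⟩ w hw
    simp only [Set.mem_Icc] at hj
    rw [hH0adj] at hw
    obtain ⟨⟨h1, -⟩, h2⟩ := hw
    have hwmem : w ∈ H.neighborSet (y j) := h1
    rcases Nat.lt_or_ge j t with hj2 | hj2
    · rcases Nat.lt_or_ge i j with hj3 | hj3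
      · rw [hp.nb_mid (j := j) (hd2 _) (by omega) (by omega)] at hwmem
        rcases hwmem with rfl | rfl
        · exact ⟨j - 1, by simp only [Set.mem_Icc]; omega, rfl⟩
        · exact ⟨j + 1, by simp only [Set.mem_Icc]; omega, rfl⟩
      · have hj4 : j = i := by omega
        rw [hj4] at hwmem h2
        rw [hp.nb_mid (j := i) (hd2 _) (by omega) (by omega)] at hwmem
        rcases hwmem with rfl | rfl
        · exact absurd (Or.inr ⟨rfl, rfl⟩) h2
        · exact ⟨i + 1, by simp only [Set.mem_Icc]; omega, rfl⟩
    · have hj4 : j = t := by omega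
      rw [hj4] at hwmem
      rw [hp.nb_last] at hwmem
      simp only [Set.mem_singleton_iff] at hwmem
      subst hwmem
      exact ⟨t - 1, by simp only [Set.mem_Icc]; omega, rfl⟩
  have hyiQr : y i ∈ Qr := ⟨i, by simp only [Set.mem_Icc]; omega, rfl⟩
  have hyi1Ql : y (i - 1) ∈ Ql := ⟨i - 1, by simp only [Set.mem_Icc]; omega, rfl⟩
  have hynotin : ∀ j k l, 1 ≤ k → l ≤ t → (j < k ∨ l < j) → 1 ≤ j → j ≤ t →
      y j ∉ y '' Set.Icc k l := by
    rintro j k l hk hl hjk hj1 hj2 ⟨m, hm, hmeq⟩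
    simp only [Set.mem_Icc] at hm
    have := hp.hinj m j (by omega) (by omega) (by omega) (by omega) hmeq
    omega
  have hnr1 : ¬H0.Reachable (y (i - 1)) (y i) := by
    intro h
    have := mem_of_reachable_closed hQlcl h hyi1Ql
    exact hynotin i 1 (i - 1) (by omega) (by omega) (by omega) (by omega) (by omega) this
  have hyi1yi : y (i - 1) ≠ y i := hp.ne_idx (by omega) (by omega) (by omega) (by omega) (by omega)
  have hcH0 : numComponents K + 1 = numComponents H0 := by
    conv_lhs => rw [← hH0K]
    exact numComponents_sup_edge_not_reach hyi1yi hnr1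
  have hxyi : x ≠ y i := fun h => (hyNE i (by omega) (by omega)) h.symm
  have hnr2 : ¬H0.Reachable x (y i) := by
    intro h
    have := mem_of_reachable_closed hQrcl h.symm hyiQr
    rcases this with ⟨m, hm, hmeq⟩
    simp only [Set.mem_Icc] at hm
    exact hyNE m (by omega) (by omega) hmeq
  set HL := H0 ⊔ edge x (y i) with hHL
  have hcHL : numComponents HL + 1 = numComponents H0 :=
    numComponents_sup_edge_not_reach hxyi hnr2
  have hcHLH : numComponents HL = numComponents H := by omega
  have hLadj : ∀ u v, HL.Adj u v ↔
      ((H.Adj u v ∧ ¬(u = x ∧ v = xp ∨ u = xp ∧ v = x)) ∧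
        ¬(u = y (i - 1) ∧ v = y i ∨ u = y i ∧ v = y (i - 1))) ∨
        (u = x ∧ v = y i ∨ u = y i ∧ v = x) := by
    intro u v
    rw [hHL, sup_edge_adj' hxyi, hH0adj]
  -- neighbour sets in HL
  obtain ⟨x2, hx2ne, hx2set⟩ := nb_card_two (hCdeg x hx) hxp
  have hx2C : x2 ∈ C.supp := by
    refine hCcl x hx x2 ?_
    have : x2 ∈ H.neighborSet x := by rw [hx2set]; right; rfl
    exact this
  obtain ⟨z, hzne, hzset⟩ := nb_card_two (hCdeg xp hxpC) hxp.symm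
  have hzC : z ∈ C.supp := by
    refine hCcl xp hxpC z ?_
    have : z ∈ H.neighborSet xp := by rw [hzset]; right; rfl
    exact this
  have hnbyi1 : H.neighborSet (y (i - 1)) = {y (i - 2), y i} := by
    have h := hp.nb_mid (j := i - 1) (hd2 _) (by omega) (by omega)
    rwa [show i - 1 - 1 = i - 2 by omega, show i - 1 + 1 = i by omega] at h
  have hnbyi : H.neighborSet (y i) = {y (i - 1), y (i + 1)} := by
    exact hp.nb_mid (j := i) (hd2 _) (by omega) (by omega)
  have hyine : ∀ k, 1 ≤ k → k ≤ t → k ≠ i → y k ≠ y i :=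
    fun k h1 h2 h3 => hp.ne_idx h1 h2 (by omega) (by omega) h3
  have hnbLx : HL.neighborSet x = {x2, y i} := by
    ext u
    rw [mem_neighborSet, hLadj]
    rw [Set.mem_insert_iff, Set.mem_singleton_iff]
    constructor
    · rintro (⟨⟨h1, h2⟩, -⟩ | ⟨⟨-, rfl⟩ | ⟨h3, -⟩⟩)
      · have : u ∈ H.neighborSet x := h1
        rw [hx2set] at this
        rcases this with rfl | rfl
        · exact absurd (Or.inl ⟨rfl, rfl⟩) h2
        · exact Or.inl rfl
      · exact Or.inr rfl
      · exact absurd h3 hxyi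
    · rintro (rfl | rfl)
      · refine Or.inl ⟨⟨?_, ?_⟩, ?_⟩
        · have : u ∈ H.neighborSet x := by rw [hx2set]; right; rfl
          exact this
        · rintro (⟨-, h5⟩ | ⟨h5, -⟩)
          · exact hx2ne h5
          · exact hxxp h5
        · rintro (⟨h5, -⟩ | ⟨h5, -⟩)
          · exact hyNE (i - 1) (by omega) (by omega) h5.symm
          · exact hyNE i (by omega) (by omega) h5.symm
      · exact Or.inr (Or.inl ⟨rfl, rfl⟩)
  have hnbLxp : HL.neighborSet xp = {z} := by
    ext u
    rw [mem_neighborSet, hLadj]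
    rw [Set.mem_singleton_iff]
    constructor
    · rintro (⟨⟨h1, h2⟩, -⟩ | ⟨⟨h3, -⟩ | ⟨h3, -⟩⟩)
      · have : u ∈ H.neighborSet xp := h1
        rw [hzset] at this
        rcases this with rfl | rfl
        · exact absurd (Or.inr ⟨rfl, rfl⟩) h2
        · rfl
      · exact absurd h3 (fun h => hxxp h.symm)
      · exact absurd h3.symm (hyNExp i (by omega) (by omega))
    · rintro rfl
      refine Or.inl ⟨⟨?_, ?_⟩, ?_⟩
      · have : u ∈ H.neighborSet xp := by rw [hzset]; right; rfl
        exact this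
      · rintro (⟨h5, -⟩ | ⟨-, h5⟩)
        · exact hxxp h5.symm
        · exact hzne h5
      · rintro (⟨h5, -⟩ | ⟨h5, -⟩)
        · exact hyNExp (i - 1) (by omega) (by omega) h5.symm
        · exact hyNExp i (by omega) (by omega) h5.symm
  have hnbLyi1 : HL.neighborSet (y (i - 1)) = {y (i - 2)} := by
    ext u
    rw [mem_neighborSet, hLadj]
    rw [Set.mem_singleton_iff]
    constructor
    · rintro (⟨⟨h1, -⟩, h2⟩ | ⟨⟨h3, -⟩ | ⟨h3, -⟩⟩)
      · have : u ∈ H.neighborSet (y (i - 1)) := h1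
        rw [hnbyi1] at this
        rcases this with rfl | rfl
        · rfl
        · exact absurd (Or.inl ⟨rfl, rfl⟩) h2
      · exact absurd h3 ((hyNE (i - 1) (by omega) (by omega)))
      · exact absurd h3 ((hyine (i - 1) (by omega) (by omega) (by omega)))
    · rintro rfl
      refine Or.inl ⟨⟨?_, ?_⟩, ?_⟩
      · have h := hp.adj_step (j := i - 2) (by omega) (by omega)
        rw [show i - 2 + 1 = i - 1 by omega] at h
        exact h.symm
      · rintro (⟨h5, -⟩ | ⟨h5, -⟩)
        · exact hyNE (i - 1) (by omega) (by omega) h5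
        · exact hyNExp (i - 1) (by omega) (by omega) h5
      · rintro (⟨-, h5⟩ | ⟨h5, -⟩)
        · exact (hyine (i - 2) (by omega) (by omega) (by omega)) h5
        · exact (hyine (i - 1) (by omega) (by omega) (by omega)) h5
  have hnbLyi : HL.neighborSet (y i) = {y (i + 1), x} := by
    ext u
    rw [mem_neighborSet, hLadj]
    rw [Set.mem_insert_iff, Set.mem_singleton_iff]
    constructor
    · rintro (⟨⟨h1, -⟩, h2⟩ | ⟨⟨h3, -⟩ | ⟨-, rfl⟩⟩)
      · have : u ∈ H.neighborSet (y i) := h1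
        rw [hnbyi] at this
        rcases this with rfl | rfl
        · exact absurd (Or.inr ⟨rfl, rfl⟩) h2
        · exact Or.inl rfl
      · exact absurd h3 (fun h => hxyi h.symm)
      · exact Or.inr rfl
    · rintro (rfl | rfl)
      · refine Or.inl ⟨⟨?_, ?_⟩, ?_⟩
        · exact hp.adj_step (j := i) (by omega) (by omega)
        · rintro (⟨h5, -⟩ | ⟨h5, -⟩)
          · exact hyNE i (by omega) (by omega) h5
          · exact hyNExp i (by omega) (by omega) h5
        · rintro (⟨-, h5⟩ | ⟨-, h5⟩)
          · exact (hyine (i + 1) (by omega) (by omega) (by omega)) h5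
          · exact (hp.ne_idx (by omega) (by omega) (by omega) (by omega)
              (by omega : (i + 1 : ℕ) ≠ i - 1)) h5
      · exact Or.inr (Or.inr ⟨rfl, rfl⟩)
  have hnbLother : ∀ v, v ≠ x → v ≠ xp → v ≠ y (i - 1) → v ≠ y i →
      HL.neighborSet v = H.neighborSet v := by
    intro v h1 h2 h3 h4
    ext u
    rw [mem_neighborSet, mem_neighborSet, hLadj]
    constructor
    · rintro (⟨⟨h5, -⟩, -⟩ | ⟨⟨h5, -⟩ | ⟨h5, -⟩⟩)
      · exact h5
      · exact absurd h5 h1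
      · exact absurd h5 h4
    · intro h5
      refine Or.inl ⟨⟨h5, ?_⟩, ?_⟩
      · rintro (⟨h6, -⟩ | ⟨h6, -⟩)
        · exact h1 h6
        · exact h2 h6
      · rintro (⟨h6, -⟩ | ⟨h6, -⟩)
        · exact h3 h6
        · exact h4 h6
  have hx2yi : x2 ≠ y i := fun h => (hCP x2 hx2C) (h ▸ hp.mem_P (by omega) (by omega))
  have hyi1x : y (i + 1) ≠ x := hyNE (i + 1) (by omega) (by omega)
  have hdegHL : ∀ v : V, 1 ≤ Nat.card (HL.neighborSet v) ∧ Nat.card (HL.neighborSet v) ≤ 2 := by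
    intro v
    by_cases h1 : v = x
    · subst h1; rw [card_nb_pair hnbLx hx2yi]; omega
    · by_cases h2 : v = xp
      · subst h2; rw [card_nb_singleton hnbLxp]; omega
      · by_cases h3 : v = y (i - 1)
        · subst h3; rw [card_nb_singleton hnbLyi1]; omega
        · by_cases h4 : v = y i
          · subst h4; rw [card_nb_pair hnbLyi hyi1x]; omega
          · rw [hnbLother v h1 h2 h3 h4]; exact hdeg12 v
  -- components of HL
  set Qb : Set V := C.supp ∪ Qr with hQb
  set T : Set V := C.supp ∪ Pset t y with hT
  have hQlclL : ∀ u ∈ Ql, ∀ w, HL.Adj u w → w ∈ Ql := by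
    intro u hu w hw
    rw [hLadj] at hw
    rcases hw with h1 | ⟨⟨rfl, rfl⟩ | ⟨rfl, rfl⟩⟩
    · exact hQlcl u hu w ((hH0adj u w).mpr h1)
    · exact absurd (hQlP hu) hxP
    · exact absurd hu (hynotin i 1 (i - 1) (by omega) (by omega) (by omega) (by omega) (by omega))
  have hchainL : ∀ k, 1 ≤ k → k < i - 1 → HL.Adj (y k) (y (k + 1)) := by
    intro k h1 h2
    rw [hLadj]
    refine Or.inl ⟨⟨hp.adj_step h1 (by omega), ?_⟩, ?_⟩
    · rintro (⟨h5, -⟩ | ⟨h5, -⟩)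
      · exact hyNE k (by omega) (by omega) h5
      · exact hyNExp k (by omega) (by omega) h5
    · rintro (⟨h5, -⟩ | ⟨h5, -⟩)
      · exact hp.ne_idx (by omega) (by omega) (by omega) (by omega) (by omega) h5
      · exact hp.ne_idx (by omega) (by omega) (by omega) (by omega) (by omega) h5
  have hy1Ql : y 1 ∈ Ql := ⟨1, by simp only [Set.mem_Icc]; omega, rfl⟩
  have hQlsupp : (HL.connectedComponentMk (y 1)).supp = Ql := by
    refine supp_eq hy1Ql hQlclL ?_
    rintro v ⟨j, hj, rfl⟩
    simp only [Set.mem_Icc] at hj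
    exact chain_reachable y 1 j (by omega) (fun k hk1 hk2 => hchainL k hk1 (by omega))
  have hQbclL : ∀ u ∈ Qb, ∀ w, HL.Adj u w → w ∈ Qb := by
    rintro u hu w hw
    rw [hLadj] at hw
    rcases hw with h1 | ⟨⟨rfl, rfl⟩ | ⟨rfl, rfl⟩⟩
    · rcases hu with hu | hu
      · exact Or.inl (hCcl u hu w (h1.1.1))
      · exact Or.inr (hQrcl u hu w ((hH0adj u w).mpr h1))
    · exact Or.inr hyiQr
    · exact Or.inl hx
  have hclK : ∀ u ∈ C.supp, ∀ w, K.Adj u w → w ∈ C.supp :=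
    fun u hu w hw => hCcl u hu w (hKle hw)
  have hstepK : ∀ u ∈ C.supp, ∀ w, K.Adj u w → HL.Reachable u w := by
    intro u hu w hw
    refine Adj.reachable ?_
    rw [hLadj]
    refine Or.inl ⟨(hKadj u w).mp hw, ?_⟩
    rintro (⟨h5, -⟩ | ⟨h5, -⟩)
    · exact (hCP u hu) (h5 ▸ hp.mem_P (by omega) (by omega))
    · exact (hCP u hu) (h5 ▸ hp.mem_P (by omega) (by omega))
  have hKrL : HL.Reachable x xp := reachable_transfer hclK hstepK hx hKr
  have hstepL : ∀ u ∈ C.supp, ∀ w, H.Adj u w → HL.Reachable u w := by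
    intro u hu w hw
    by_cases hpair : u = x ∧ w = xp ∨ u = xp ∧ w = x
    · rcases hpair with ⟨rfl, rfl⟩ | ⟨rfl, rfl⟩
      · exact hKrL
      · exact hKrL.symm
    · refine Adj.reachable ?_
      rw [hLadj]
      refine Or.inl ⟨⟨hw, hpair⟩, ?_⟩
      rintro (⟨h5, -⟩ | ⟨h5, -⟩)
      · exact (hCP u hu) (h5 ▸ hp.mem_P (by omega) (by omega))
      · exact (hCP u hu) (h5 ▸ hp.mem_P (by omega) (by omega))
  have hchainR : ∀ k, i ≤ k → k < t → HL.Adj (y k) (y (k + 1)) := by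
    intro k h1 h2
    rw [hLadj]
    refine Or.inl ⟨⟨hp.adj_step (by omega) h2, ?_⟩, ?_⟩
    · rintro (⟨h5, -⟩ | ⟨h5, -⟩)
      · exact hyNE k (by omega) (by omega) h5
      · exact hyNExp k (by omega) (by omega) h5
    · rintro (⟨h5, -⟩ | ⟨-, h5⟩)
      · exact hp.ne_idx (by omega) (by omega) (by omega) (by omega) (by omega) h5
      · exact hp.ne_idx (by omega) (by omega) (by omega) (by omega) (by omega) h5
  have hLxyi : HL.Adj x (y i) := by
    rw [hLadj]
    exact Or.inr (Or.inl ⟨rfl, rfl⟩)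
  have hQbsupp : (HL.connectedComponentMk x).supp = Qb := by
    refine supp_eq (Or.inl hx) hQbclL ?_
    rintro v (hv | ⟨j, hj, rfl⟩)
    · refine reachable_transfer hCcl hstepL hx ?_
      have h1 : H.connectedComponentMk x = C := (ConnectedComponent.mem_supp_iff _ _).mp hx
      have h2 : H.connectedComponentMk v = C := (ConnectedComponent.mem_supp_iff _ _).mp hv
      exact ConnectedComponent.exact (h1.trans h2.symm)
    · simp only [Set.mem_Icc] at hj
      exact hLxyi.reachable.trans
        (chain_reachable y i j (by omega) (fun k hk1 hk2 => hchainR k hk1 (by omega)))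
  have hTun : ∀ v ∈ T, (H.connectedComponentMk v).supp ⊆ T := by
    rintro v (hv | hv)
    · have h1 : H.connectedComponentMk v = C := (ConnectedComponent.mem_supp_iff _ _).mp hv
      rw [h1]; exact fun u hu => Or.inl hu
    · obtain ⟨j, ⟨hj1, hj2⟩, rfl⟩ := hv
      have h1 : H.connectedComponentMk (y j) = H.connectedComponentMk (y 1) := by
        have := hp.supp_eq_Pset ▸ hp.mem_P hj1 hj2
        exact (ConnectedComponent.mem_supp_iff _ _).mp this
      rw [h1, hp.supp_eq_Pset]; exact fun u hu => Or.inr hu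
  have hagree : ∀ u w, u ∉ T → (H.Adj u w ↔ HL.Adj u w) := by
    intro u w hu
    have h1 : u ≠ x := fun h => hu (h ▸ Or.inl hx)
    have h2 : u ≠ xp := fun h => hu (h ▸ Or.inl hxpC)
    have h3 : u ≠ y (i - 1) := fun h => hu (h ▸ Or.inr (hp.mem_P (by omega) (by omega)))
    have h4 : u ≠ y i := fun h => hu (h ▸ Or.inr (hp.mem_P (by omega) (by omega)))
    rw [← mem_neighborSet, ← mem_neighborSet, hnbLother u h1 h2 h3 h4]
  have hy1x : y 1 ≠ x := hyNE 1 (by omega) (by omega)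
  have hy1xp : y 1 ≠ xp := hyNExp 1 (by omega) (by omega)
  have hy1yi1 : y 1 ≠ y (i - 1) := hp.ne_idx (by omega) (by omega) (by omega) (by omega) (by omega)
  have hy1yi : y 1 ≠ y i := hp.ne_idx (by omega) (by omega) (by omega) (by omega) (by omega)
  have hnbLy1 : HL.neighborSet (y 1) = H.neighborSet (y 1) :=
    hnbLother _ hy1x hy1xp hy1yi1 hy1yi
  have hytx : y t ≠ x := hyNE t (by omega) le_rfl
  have hytxp : y t ≠ xp := hyNExp t (by omega) le_rfl
  have hytyi1 : y t ≠ y (i - 1) := hp.ne_idx (by omega) le_rfl (by omega) (by omega) (by omega)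
  have hytyi : y t ≠ y i := hp.ne_idx (by omega) le_rfl (by omega) (by omega) (by omega)
  have hnbLyt : HL.neighborSet (y t) = H.neighborSet (y t) :=
    hnbLother _ hytx hytxp hytyi1 hytyi
  have hnadjxpyt : ¬ G.Adj xp (y t) := by
    intro hGA
    refine lemA ⟨⟨⟨hHG, hdeg12, hoddc⟩, hmc⟩, hmo⟩ hp.rev ?_ (mem_supp_self xp) ?_
    · rwa [(ConnectedComponent.mem_supp_iff _ _).mp hxpC]
    · show G.Adj xp (y (t + 1 - 1))
      rw [show t + 1 - 1 = t by omega]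
      exact hGA
  have hvalHL : IsValidFactor G HL := by
    refine ⟨?_, hdegHL, ?_⟩
    · rw [hHL]
      exact sup_le (hH0le.trans hHG) (edge_le_of_adj hedge)
    · intro c
      induction c using ConnectedComponent.ind
      rename_i w
      intro hodd u v hu hv huv hdu hdv
      by_cases hwT : w ∈ T
      · have hw' : w ∈ Ql ∨ w ∈ Qb := by
          rcases hwT with h | ⟨j, ⟨hj1, hj2⟩, rfl⟩
          · exact Or.inr (Or.inl h)
          · rcases Nat.lt_or_ge j i with hj | hj
            · exact Or.inl ⟨j, by simp only [Set.mem_Icc]; omega, rfl⟩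
            · exact Or.inr (Or.inr ⟨j, by simp only [Set.mem_Icc]; omega, rfl⟩)
        rcases hw' with hwQl | hwQb
        · have hcomp : HL.connectedComponentMk w = HL.connectedComponentMk (y 1) := by
            have := hQlsupp ▸ hwQl
            exact (ConnectedComponent.mem_supp_iff _ _).mp this
          rw [hcomp, hQlsupp] at hu hv hodd
          have hcardQl : Nat.card (Ql : Set V) = i - 1 := by
            rw [Nat.card_coe_set_eq, hQl, hp.ncard_image (by omega) (by omega)]
            omega
          rw [hcardQl] at hodd
          obtain ⟨hne2, hnadj⟩ := hsafe hodd
          have hdg : ∀ u' ∈ Ql, Nat.card (HL.neighborSet u') = 1 → u' = y 1 ∨ u' = y (i - 1) := by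
            rintro u' ⟨j, hj, rfl⟩ hc
            simp only [Set.mem_Icc] at hj
            by_cases hj1 : j = 1
            · exact Or.inl (by rw [hj1])
            · by_cases hj2 : j = i - 1
              · exact Or.inr (by rw [hj2])
              · exfalso
                have e1 : y j ≠ x := hyNE j (by omega) (by omega)
                have e2 : y j ≠ xp := hyNExp j (by omega) (by omega)
                have e3 : y j ≠ y (i - 1) :=
                  hp.ne_idx (by omega) (by omega) (by omega) (by omega) (by omega)
                have e4 : y j ≠ y i :=
                  hp.ne_idx (by omega) (by omega) (by omega) (by omega) (by omega)
                rw [hnbLother _ e1 e2 e3 e4] at hc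
                rw [card_nb_pair (hp.nb_mid (j := j) (hd2 _) (by omega) (by omega))
                  (hp.ne_idx (by omega) (by omega) (by omega) (by omega) (by omega))] at hc
                omega
          rcases hdg u hu hdu with rfl | rfl <;> rcases hdg v hv hdv with rfl | rfl
          · exact absurd rfl huv
          · exact hnadj
          · exact fun h => hnadj h.symm
          · exact absurd rfl huv
        · have hcomp : HL.connectedComponentMk w = HL.connectedComponentMk x := by
            have := hQbsupp ▸ hwQb
            exact (ConnectedComponent.mem_supp_iff _ _).mp this
          rw [hcomp, hQbsupp] at hu hv
          have hdg : ∀ u' ∈ Qb, Nat.card (HL.neighborSet u') = 1 → u' = xp ∨ u' = y t := by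
            rintro u' (hu' | ⟨j, hj, rfl⟩) hc
            · by_cases h1 : u' = x
              · exfalso; rw [h1, card_nb_pair hnbLx hx2yi] at hc; omega
              · by_cases h2 : u' = xp
                · exact Or.inl h2
                · exfalso
                  have h3 : u' ≠ y (i - 1) :=
                    fun h => (hCP u' hu') (h ▸ hp.mem_P (by omega) (by omega))
                  have h4 : u' ≠ y i :=
                    fun h => (hCP u' hu') (h ▸ hp.mem_P (by omega) (by omega))
                  rw [hnbLother u' h1 h2 h3 h4, hCdeg u' hu'] at hc
                  omega
            · simp only [Set.mem_Icc] at hj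
              by_cases hjt : j = t
              · exact Or.inr (by rw [hjt])
              · exfalso
                by_cases hji : j = i
                · rw [hji, card_nb_pair hnbLyi hyi1x] at hc; omega
                · have e1 : y j ≠ x := hyNE j (by omega) (by omega)
                  have e2 : y j ≠ xp := hyNExp j (by omega) (by omega)
                  have e3 : y j ≠ y (i - 1) :=
                    hp.ne_idx (by omega) (by omega) (by omega) (by omega) (by omega)
                  have e4 : y j ≠ y i :=
                    hp.ne_idx (by omega) (by omega) (by omega) (by omega) (by omega)
                  rw [hnbLother _ e1 e2 e3 e4] at hc
                  rw [card_nb_pair (hp.nb_mid (j := j) (hd2 _) (by omega) (by omega))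
                    (hp.ne_idx (by omega) (by omega) (by omega) (by omega) (by omega))] at hc
                  omega
          rcases hdg u hu hdu with rfl | rfl <;> rcases hdg v hv hdv with rfl | rfl
          · exact absurd rfl huv
          · exact hnadjxpyt
          · exact fun h => hnadjxpyt h.symm
          · exact absurd rfl huv
      · exact untouched_valid_cond ⟨hHG, hdeg12, hoddc⟩ hagree hTun hwT hodd u v hu hv huv hdu hdv
  -- odd cycles decrease
  have hdisjT : ∀ w, w ∉ T → ∀ v ∈ (H.connectedComponentMk w).supp, v ∉ T := by
    intro w hw v hv hvT
    refine hw ?_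
    have h1 := hTun v hvT
    have h2 : H.connectedComponentMk v = H.connectedComponentMk w :=
      (ConnectedComponent.mem_supp_iff _ _).mp hv
    exact h1 (by rw [h2]; exact mem_supp_self w)
  have hout : ∀ c : HL.ConnectedComponent, OddCycleComp HL c → c.out ∉ T := by
    intro c hc hcT
    have hwc : HL.connectedComponentMk c.out = c := c.out_eq
    have hsplit : c.out ∈ Ql ∨ c.out ∈ Qb := by
      rcases hcT with h | ⟨j, ⟨hj1, hj2⟩, hj3⟩
      · exact Or.inr (Or.inl h)
      · rcases Nat.lt_or_ge j i with hj | hj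
        · exact Or.inl ⟨j, by simp only [Set.mem_Icc]; omega, hj3⟩
        · exact Or.inr (Or.inr ⟨j, by simp only [Set.mem_Icc]; omega, hj3⟩)
    rcases hsplit with h | h
    · have hcomp : c = HL.connectedComponentMk (y 1) := by
        rw [← hwc]
        exact (ConnectedComponent.mem_supp_iff _ _).mp (hQlsupp ▸ h)
      have hmem : y 1 ∈ c.supp := by rw [hcomp, hQlsupp]; exact hy1Ql
      have := hc.2 (y 1) hmem
      rw [hnbLy1] at this
      have := hp.hend1
      omega
    · have hcomp : c = HL.connectedComponentMk x := by
        rw [← hwc]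
        exact (ConnectedComponent.mem_supp_iff _ _).mp (hQbsupp ▸ h)
      have hmem : xp ∈ c.supp := by rw [hcomp, hQbsupp]; exact Or.inl hxpC
      have := hc.2 xp hmem
      rw [card_nb_singleton hnbLxp] at this
      omega
  have hOCH : ∀ c : {c : HL.ConnectedComponent // OddCycleComp HL c},
      OddCycleComp H (H.connectedComponentMk c.1.out) := by
    rintro ⟨c, hc⟩
    have hw : c.out ∉ T := hout c hc
    have hsupp2 := comp_transfer hagree (hdisjT c.out hw)
    have hwc : HL.connectedComponentMk c.out = c := c.out_eq
    constructor
    · have h1 := hc.1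
      rw [← hwc, hsupp2] at h1
      exact h1
    · intro v hv
      have hv2 : v ∈ (HL.connectedComponentMk c.out).supp := by rw [hsupp2]; exact hv
      have h2 := hc.2 v (by rw [← hwc]; exact hv2)
      rwa [← nb_transfer hagree (hdisjT c.out hw v hv)] at h2
  have hocclt : numOddCycles HL < numOddCycles H := by
    refine card_lt_of_inj_notmem
      (fun c : {c : HL.ConnectedComponent // OddCycleComp HL c} =>
        (⟨H.connectedComponentMk c.1.out, hOCH c⟩ : {c : H.ConnectedComponent // OddCycleComp H c}))
      ?_ (b := ⟨C, hC⟩) ?_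
    · rintro ⟨c, hc⟩ ⟨c', hc'⟩ hcc
      simp only [Subtype.mk.injEq] at hcc
      have h1 : c'.out ∈ (H.connectedComponentMk c.out).supp := by
        rw [hcc]; exact mem_supp_self _
      have h2 := comp_transfer hagree (hdisjT c.out (hout c hc))
      have h3 : c'.out ∈ (HL.connectedComponentMk c.out).supp := by rw [h2]; exact h1
      have h4 : HL.connectedComponentMk c'.out = HL.connectedComponentMk c.out :=
        (ConnectedComponent.mem_supp_iff _ _).mp h3
      apply Subtype.ext
      exact (c'.out_eq.symm.trans (h4.trans c.out_eq)).symm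
    · rintro ⟨⟨c, hc⟩, hfc⟩
      simp only [Subtype.mk.injEq] at hfc
      have h1 : c.out ∈ C.supp := by
        rw [ConnectedComponent.mem_supp_iff, hfc]
      exact hout c hc (Or.inl h1)
  have hle := hmo HL hvalHL hcHLH
  omega

end Stmt11Aux

end Stmt11AuxSec

/-- If G has an edge x yᵢ with x on an odd cycle C of a minimal valid factor and
yᵢ the i-th vertex of a path component y₁⋯y_t, then i is even, t is odd, and
moreover y₁y_{i-1} ∈ E(G) unless i = 2, and y_{i+1}y_t ∈ E(G) unless i = t-1. -/
theorem stmt11 {V : Type*} [Fintype V] (G H : SimpleGraph V) (hG : IsCubic G)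
    (hmin : IsMinValidFactor G H)
    (C : H.ConnectedComponent) (hC : OddCycleComp H C) (x : V) (hx : x ∈ C.supp)
    (t : ℕ) (y : ℕ → V) (ht : 1 ≤ t)
    (hinj : ∀ i j, 1 ≤ i → i ≤ t → 1 ≤ j → j ≤ t → y i = y j → i = j)
    (hsupp : (H.connectedComponentMk (y 1)).supp = {v | ∃ i, 1 ≤ i ∧ i ≤ t ∧ y i = v})
    (hadjP : ∀ i, 1 ≤ i → i < t → H.Adj (y i) (y (i+1)))
    (hend1 : Nat.card (H.neighborSet (y 1)) = 1)
    (hend2 : Nat.card (H.neighborSet (y t)) = 1)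
    (i : ℕ) (hi1 : 1 ≤ i) (hit : i ≤ t) (hedge : G.Adj x (y i)) :
    Even i ∧ Odd t ∧ (i ≠ 2 → G.Adj (y 1) (y (i-1))) ∧
      (i ≠ t-1 → G.Adj (y (i+1)) (y t)) := by
  classical
  have hp : Stmt11Aux.PCtx H t y := ⟨ht, hinj, hsupp, hadjP, hend1, hend2⟩
  have hrevedge : G.Adj x (y (t + 1 - (t + 1 - i))) := by
    rw [show t + 1 - (t + 1 - i) = i by omega]
    exact hedge
  have heven : Even i := by
    by_contra hodd
    rw [Nat.not_even_iff_odd] at hodd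
    refine Stmt11Aux.core hmin hp hC hx hi1 hit hedge ?_
    intro h
    exfalso
    rw [Nat.odd_iff] at h hodd
    omega
  have hoddt : Odd t := by
    by_contra ht'
    rw [Nat.not_odd_iff_even] at ht'
    refine Stmt11Aux.core hmin hp.rev hC hx (i := t + 1 - i) (by omega) (by omega) hrevedge ?_
    intro hoddr
    exfalso
    rw [Nat.odd_iff] at hoddr
    rw [Nat.even_iff] at ht'
    rcases heven with ⟨k, hk⟩
    omega
  have hc3 : i ≠ 2 → G.Adj (y 1) (y (i - 1)) := by
    intro hne2
    by_contra hnadj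
    exact Stmt11Aux.core hmin hp hC hx hi1 hit hedge (fun _ => ⟨hne2, hnadj⟩)
  have hc4 : i ≠ t - 1 → G.Adj (y (i + 1)) (y t) := by
    intro hne
    by_contra hnadj
    refine Stmt11Aux.core hmin hp.rev hC hx (i := t + 1 - i) (by omega) (by omega) hrevedge ?_
    intro hoddr
    refine ⟨by omega, ?_⟩
    show ¬ G.Adj (y (t + 1 - 1)) (y (t + 1 - (t + 1 - i - 1)))
    rw [show t + 1 - 1 = t by omega, show t + 1 - (t + 1 - i - 1) = i + 1 by omega]
    exact fun h => hnadj h.symm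
  exact ⟨heven, hoddt, hc3, hc4⟩
end

section
/- Let G be a cubic graph, D an orientation of G with a circular nowhere-zero r-flow, and let V₁, V₂ be the sets of vertices of out-degree 1 and 2 respectively in D. Then for every set X of vertices, |E(X)| ≥ (r/(r-2)) · | |V₁ ∩ X| − |V₂ ∩ X| |, where E(X) is the set of edges with exactly one endpoint in X. -/
open SimpleGraph

/-!
Summing flow conservation over `X` shows that as much flow leaves `X` as enters it. Every arc
carries between `1` and `r - 1`, so the numbers `a` and `b` of arcs leaving and entering `X`
satisfy `a ≤ (r - 1) b` and `b ≤ (r - 1) a`, whence `r / (r - 2) * |a - b| ≤ a + b = |E(X)|`.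
Summing out-degree minus in-degree over `X` gives `a - b`; in a cubic graph that difference is
`+1` on `V₂` and `-1` on `V₁` (a source or sink would violate conservation), so
`a - b = |V₂ ∩ X| - |V₁ ∩ X|`.
-/

open Finset

lemma Nat.card_setOf_eq_card_filter {V : Type*} [Fintype V] (P : V → Prop) [DecidablePred P] :
    Nat.card {v | P v} = #{v | P v} := by
  rw [Nat.card_eq_fintype_card]
  exact Fintype.card_subtype P

lemma Finset.sum_sum_sub_sum_sum_eq_cut {V M : Type*} [Fintype V] [DecidableEq V]
    [AddCommGroup M] (s : Finset V) (g : V → V → M) :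
    ∑ v ∈ s, (∑ u, g v u - ∑ u, g u v) = ∑ v ∈ s, ∑ u ∈ sᶜ, g v u - ∑ v ∈ sᶜ, ∑ u ∈ s, g v u := by
  have inner_cancel : ∑ v ∈ s, ∑ u ∈ s, g v u = ∑ v ∈ s, ∑ u ∈ s, g u v := sum_comm
  have cross : ∑ v ∈ s, ∑ u ∈ sᶜ, g u v = ∑ v ∈ sᶜ, ∑ u ∈ s, g v u := sum_comm
  simp only [sum_sub_distrib, ← sum_add_sum_compl s, sum_add_distrib, inner_cancel, cross]
  abel

section Arcs

variable {V : Type*} (dir : V → V → Bool)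

def arcSum (w : V → V → ℝ) (s t : Finset V) : ℝ :=
  ∑ v ∈ s, ∑ u ∈ t, if dir v u then w v u else 0

lemma sum_out_sub_in_eq_arcSum_sub [Fintype V] [DecidableEq V] (w : V → V → ℝ) (s : Finset V) :
    ∑ v ∈ s, (∑ u with dir v u, w v u - ∑ u with dir u v, w u v)
      = arcSum dir w s sᶜ - arcSum dir w sᶜ s := by
  simp only [sum_filter]
  exact sum_sum_sub_sum_sum_eq_cut s fun v u => if dir v u then w v u else 0

lemma arcSum_mono {w w' : V → V → ℝ} (h : ∀ v u, dir v u → w v u ≤ w' v u) (s t : Finset V) :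
    arcSum dir w s t ≤ arcSum dir w' s t :=
  sum_le_sum fun v _ => sum_le_sum fun u _ => by
    split_ifs with huv
    exacts [h v u huv, le_rfl]

lemma arcSum_const (a : ℝ) (s t : Finset V) :
    arcSum dir (fun _ _ => a) s t = a * arcSum dir 1 s t := by
  simp only [arcSum, mul_sum, Pi.one_apply, mul_ite, mul_one, mul_zero]

end Arcs

lemma div_sub_two_mul_abs_sub_le_add {r a b : ℝ} (hr : 2 < r) (hab : a ≤ (r - 1) * b)
    (hba : b ≤ (r - 1) * a) : r / (r - 2) * |a - b| ≤ a + b := by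
  rw [div_mul_eq_mul_div, div_le_iff₀ (by linarith)]
  rcases le_total a b with h | h
  · rw [abs_of_nonpos (by linarith)]
    linarith
  · rw [abs_of_nonneg (by linarith)]
    linarith

namespace CNZF

variable {V : Type*} [Fintype V] {G : SimpleGraph V} {r : ℝ} (c : CNZF G r)

lemma sum_out_eq_sum_in (v : V) :
    ∑ u with c.dir v u, c.f v u = ∑ u with c.dir u v, c.f u v := by
  simpa only [sum_filter] using c.conserv v

lemma card_out_eq_zero_iff (v : V) : #{u | c.dir v u} = 0 ↔ #{u | c.dir u v} = 0 := by
  have out_le : #{u | c.dir v u} ≤ ∑ u with c.dir v u, c.f v u := by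
    simpa using card_nsmul_le_sum _ _ 1 fun u hu => c.lb v u (mem_filter.1 hu).2
  have in_le : #{u | c.dir u v} ≤ ∑ u with c.dir u v, c.f u v := by
    simpa using card_nsmul_le_sum _ _ 1 fun u hu => c.lb u v (mem_filter.1 hu).2
  have conserv := c.sum_out_eq_sum_in v
  constructor <;> intro h
  · have hin : ∑ u with c.dir u v, c.f u v = 0 := by rw [← conserv, card_eq_zero.1 h, sum_empty]
    exact_mod_cast le_antisymm (in_le.trans hin.le) (Nat.cast_nonneg _)
  · have hout : ∑ u with c.dir v u, c.f v u = 0 := by rw [conserv, card_eq_zero.1 h, sum_empty]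
    exact_mod_cast le_antisymm (out_le.trans hout.le) (Nat.cast_nonneg _)

lemma card_out_add_card_in (hG : IsCubic G) (v : V) :
    #{u | c.dir v u} + #{u | c.dir u v} = 3 := by
  classical
  have hdisj : Disjoint ({u | c.dir v u} : Finset V) ({u | c.dir u v} : Finset V) :=
    disjoint_filter.2 fun u _ h1 h2 => by simp [c.asymm v u h1] at h2
  rw [← card_union_of_disjoint hdisj, ← filter_or, ← hG v, Nat.card_eq_fintype_card,
    ← Set.toFinset_card]
  congr 1
  ext u
  simp [c.orients v u]

lemma outDeg_eq_card (v : V) : outDeg c.dir v = #{u | c.dir v u} :=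
  Nat.card_setOf_eq_card_filter _

lemma outDeg_eq_one_or_two (hG : IsCubic G) (v : V) :
    outDeg c.dir v = 1 ∨ outDeg c.dir v = 2 := by
  have hdeg := c.card_out_add_card_in hG v
  have no_source_sink := c.card_out_eq_zero_iff v
  rw [outDeg_eq_card]
  omega

lemma arcSum_one_sub_arcSum_one [DecidableEq V] (hG : IsCubic G) (s : Finset V) :
    arcSum c.dir 1 s sᶜ - arcSum c.dir 1 sᶜ s
      = #{v ∈ s | outDeg c.dir v = 2} - #{v ∈ s | outDeg c.dir v = 1} := by
  rw [← sum_out_sub_in_eq_arcSum_sub, ← sum_boole, ← sum_boole, ← sum_sub_distrib]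
  refine sum_congr rfl fun v _ => ?_
  have hdeg := c.card_out_add_card_in hG v
  simp only [Pi.one_apply, sum_const, nsmul_one, ← c.outDeg_eq_card] at hdeg ⊢
  rw [show #{u | c.dir u v} = 3 - outDeg c.dir v by omega]
  rcases c.outDeg_eq_one_or_two hG v with h | h <;> norm_num [h]

lemma arcSum_flow_compl [DecidableEq V] (s : Finset V) :
    arcSum c.dir c.f s sᶜ = arcSum c.dir c.f sᶜ s := by
  rw [← sub_eq_zero, ← sum_out_sub_in_eq_arcSum_sub]
  exact sum_eq_zero fun v _ => sub_eq_zero.2 (c.sum_out_eq_sum_in v)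

lemma arcSum_one_le_sub_one_mul [DecidableEq V] (s : Finset V) :
    arcSum c.dir 1 s sᶜ ≤ (r - 1) * arcSum c.dir 1 sᶜ s :=
  calc arcSum c.dir 1 s sᶜ ≤ arcSum c.dir c.f s sᶜ := arcSum_mono _ c.lb _ _
    _ = arcSum c.dir c.f sᶜ s := c.arcSum_flow_compl s
    _ ≤ arcSum c.dir (fun _ _ => r - 1) sᶜ s := arcSum_mono _ c.ub _ _
    _ = (r - 1) * arcSum c.dir 1 sᶜ s := arcSum_const _ _ _ _

lemma card_cut_eq_arcSum_add [DecidableEq V] [DecidableRel G.Adj] (s : Finset V) :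
    (#{p ∈ s ×ˢ sᶜ | G.Adj p.1 p.2} : ℝ) = arcSum c.dir 1 s sᶜ + arcSum c.dir 1 sᶜ s := by
  have cross : arcSum c.dir 1 sᶜ s = ∑ v ∈ s, ∑ u ∈ sᶜ, if c.dir u v then 1 else 0 := sum_comm
  rw [cross, arcSum, ← sum_add_distrib, card_filter, sum_product, Nat.cast_sum]
  refine sum_congr rfl fun v _ => ?_
  rw [Nat.cast_sum, ← sum_add_distrib]
  refine sum_congr rfl fun u _ => ?_
  simp only [c.orients v u, Pi.one_apply]
  cases huv : c.dir v u
  · simp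
  · simp [c.asymm v u huv]

end CNZF

/-- For an orientation of a cubic graph with a circular nowhere-zero r-flow and
the partition (V₁, V₂) by out-degree, every vertex set X satisfies
|E(X)| ≥ (r/(r-2)) · ||V₁ ∩ X| − |V₂ ∩ X||. -/
theorem stmt18 {V : Type*} [Fintype V] (G : SimpleGraph V) (r : ℝ) (hr : 2 < r)
    (hG : IsCubic G) (c : CNZF G r) (X : Set V) :
    (r / (r - 2)) *
        |((Nat.card {v | v ∈ X ∧ outDeg c.dir v = 1} : ℝ)
          - (Nat.card {v | v ∈ X ∧ outDeg c.dir v = 2} : ℝ))|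
      ≤ (Nat.card {p : V × V | p.1 ∈ X ∧ p.2 ∉ X ∧ G.Adj p.1 p.2} : ℝ) := by
  classical
  set s : Finset V := {v | v ∈ X}
  have card_V : ∀ k, Nat.card {v | v ∈ X ∧ outDeg c.dir v = k} = #{v ∈ s | outDeg c.dir v = k} :=
    fun k => by rw [Nat.card_setOf_eq_card_filter, filter_filter]
  have card_E : Nat.card {p : V × V | p.1 ∈ X ∧ p.2 ∉ X ∧ G.Adj p.1 p.2}
      = #{p ∈ s ×ˢ sᶜ | G.Adj p.1 p.2} := by
    rw [Nat.card_setOf_eq_card_filter]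
    congr 1
    ext p
    simp [s, and_assoc]
  rw [card_V, card_V, card_E, c.card_cut_eq_arcSum_add, abs_sub_comm,
    ← c.arcSum_one_sub_arcSum_one hG]
  refine div_sub_two_mul_abs_sub_le_add hr (c.arcSum_one_le_sub_one_mul s) ?_
  simpa only [compl_compl] using c.arcSum_one_le_sub_one_mul sᶜ
end
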